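/- arXiv:2306.08142 — 7 statements merged into one kernel-verified Lean document; each statement's English description precedes it below -/
import Mathlib

section
/- Kummer's integral representation of the confluent hypergeometric function: for all real numbers a, b with b > a > 0 and every real z, one has ∫₀¹ e^{z u} u^{a-1} (1-u)^{b-a-1} du = (Γ(a)Γ(b-a)/Γ(b)) · Σ_{k=0}^∞ ((a)_k / (b)_k) · z^k / k!, where (a)_k := Γ(a+k)/Γ(a) denotes the rising factorial and Γ is the real Gamma function. -/
/-!
Expand `e^{zu} = ∑ (zu)^k / k!` and integrate term by term against the Beta weight
`u^(a-1) (1-u)^(b-a-1)`; this is legitimate because the series is dominated by `e^{|z|}` times the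
weight, which is integrable. The `k`-th term is then the Beta integral
`B(a + k, b - a) = Γ(a + k) Γ(b - a) / Γ(b + k)`, and dividing by `B(a, b - a)` gives `(a)_k / (b)_k`.
-/

open Real MeasureTheory Set intervalIntegral
open scoped Nat

lemma cpow_mul_one_sub_cpow_eq_ofReal {u v x : ℝ} (hx : x ∈ Icc (0 : ℝ) 1) :
    (x : ℂ) ^ ((u : ℂ) - 1) * (1 - (x : ℂ)) ^ ((v : ℂ) - 1) =
      ((x ^ (u - 1) * (1 - x) ^ (v - 1) : ℝ) : ℂ) := by
  rw [Complex.ofReal_mul, Complex.ofReal_cpow hx.1, Complex.ofReal_cpow (sub_nonneg.2 hx.2)]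
  push_cast
  rfl

lemma Complex.betaIntegral_ofReal (u v : ℝ) :
    Complex.betaIntegral u v = ↑(∫ x in (0 : ℝ)..1, x ^ (u - 1) * (1 - x) ^ (v - 1)) := by
  rw [Complex.betaIntegral, ← intervalIntegral.integral_ofReal]
  refine integral_congr fun x hx => cpow_mul_one_sub_cpow_eq_ofReal ?_
  rwa [uIcc_of_le zero_le_one] at hx

lemma intervalIntegrable_rpow_mul_one_sub_rpow {u v : ℝ} (hu : 0 < u) (hv : 0 < v) :
    IntervalIntegrable (fun x => x ^ (u - 1) * (1 - x) ^ (v - 1)) volume 0 1 := by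
  have h := (Complex.betaIntegral_convergent (u := u) (v := v) (by simpa) (by simpa)).congr
    (g := fun x : ℝ => ((x ^ (u - 1) * (1 - x) ^ (v - 1) : ℝ) : ℂ)) fun x hx => by
      rw [uIoc_of_le zero_le_one] at hx
      exact cpow_mul_one_sub_cpow_eq_ofReal (Ioc_subset_Icc_self hx)
  rw [intervalIntegrable_iff] at h ⊢
  simpa [IntegrableOn] using h.re

lemma integral_rpow_mul_one_sub_rpow {u v : ℝ} (hu : 0 < u) (hv : 0 < v) :
    ∫ x in (0 : ℝ)..1, x ^ (u - 1) * (1 - x) ^ (v - 1) = Gamma u * Gamma v / Gamma (u + v) := by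
  have h := Complex.Gamma_mul_Gamma_eq_betaIntegral (s := u) (t := v) (by simpa) (by simpa)
  rw [Complex.betaIntegral_ofReal, ← Complex.ofReal_add, Complex.Gamma_ofReal,
    Complex.Gamma_ofReal, Complex.Gamma_ofReal] at h
  rw [eq_div_iff (Gamma_pos_of_pos (add_pos hu hv)).ne']
  exact_mod_cast (h.trans (mul_comm _ _)).symm

lemma hasSum_integral_exp_mul_mul {w : ℝ → ℝ} (hw : IntervalIntegrable w volume 0 1) (z : ℝ) :
    HasSum (fun k : ℕ => z ^ k / k ! * ∫ x in (0 : ℝ)..1, x ^ k * w x)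
      (∫ x in (0 : ℝ)..1, exp (z * x) * w x) := by
  simp_rw [← intervalIntegral.integral_const_mul]
  refine hasSum_integral_of_dominated_convergence (fun k x => |z| ^ k / k ! * |w x|)
    (fun k => ((hw.continuousOn_mul (continuousOn_pow k)).const_mul _).def'.aestronglyMeasurable)
    (fun k => ?_) ?_ ?_ ?_
  · refine Filter.Eventually.of_forall fun x hx => ?_
    rw [uIoc_of_le zero_le_one] at hx
    have hxk : |x| ^ k ≤ 1 := by
      rw [abs_of_pos hx.1]
      exact pow_le_one₀ hx.1.le hx.2
    simp only [norm_mul, norm_div, norm_pow, Real.norm_eq_abs, Nat.abs_cast]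
    gcongr
    exact mul_le_of_le_one_left (abs_nonneg _) hxk
  · exact Filter.Eventually.of_forall fun x _ => (summable_pow_div_factorial |z|).mul_right _
  · simp_rw [tsum_mul_right]
    exact hw.norm.const_mul _
  · refine Filter.Eventually.of_forall fun x _ => ?_
    have hexp : HasSum (fun k : ℕ => (z * x) ^ k / k !) (exp (z * x)) := by
      rw [exp_eq_exp_ℝ]
      exact NormedSpace.expSeries_div_hasSum_exp _
    have hterm : (fun k : ℕ => z ^ k / k ! * (x ^ k * w x)) = fun k => (z * x) ^ k / k ! * w x :=
      funext fun k => by ring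
    rw [hterm]
    exact hexp.mul_right (w x)

lemma integral_pow_mul_rpow_mul_one_sub_rpow {u v : ℝ} (hu : 0 < u) (hv : 0 < v) (k : ℕ) :
    ∫ x in (0 : ℝ)..1, x ^ k * (x ^ (u - 1) * (1 - x) ^ (v - 1)) =
      Gamma (u + k) * Gamma v / Gamma (u + k + v) := by
  rw [← integral_rpow_mul_one_sub_rpow (by positivity) hv]
  refine integral_congr_ae (Filter.Eventually.of_forall fun x hx => ?_)
  rw [uIoc_of_le zero_le_one] at hx
  rw [← mul_assoc, add_sub_right_comm, rpow_add_natCast hx.1.ne', mul_comm (x ^ k)]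

/-- Kummer's integral representation of the confluent hypergeometric function:
for `b > a > 0` and every real `z`,
`∫₀¹ e^{z u} u^{a-1} (1-u)^{b-a-1} du
  = (Γ(a)Γ(b-a)/Γ(b)) · Σ_{k=0}^∞ ((a)_k/(b)_k) z^k/k!`,
where `(a)_k := Γ(a+k)/Γ(a)`. -/
theorem kummer_integral_representation (a b z : ℝ) (ha : 0 < a) (hab : a < b) :
    (∫ u in (0:ℝ)..1, Real.exp (z * u) * u ^ (a - 1) * (1 - u) ^ (b - a - 1)) =
      (Real.Gamma a * Real.Gamma (b - a) / Real.Gamma b) *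
        ∑' k : ℕ, ((Real.Gamma (a + k) / Real.Gamma a) /
          (Real.Gamma (b + k) / Real.Gamma b)) * z ^ k / (Nat.factorial k) := by
  have hba : 0 < b - a := sub_pos.2 hab
  simp_rw [mul_assoc (exp _)]
  rw [← (hasSum_integral_exp_mul_mul (intervalIntegrable_rpow_mul_one_sub_rpow ha hba) z).tsum_eq,
    ← tsum_mul_left]
  refine tsum_congr fun k => ?_
  rw [integral_pow_mul_rpow_mul_one_sub_rpow ha hba, show a + k + (b - a) = b + k by ring]
  have hΓa := (Gamma_pos_of_pos ha).ne'
  have hΓb := (Gamma_pos_of_pos (ha.trans hab)).ne'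
  field_simp
end

section
/- Kummer's first theorem as a series identity: for all real numbers a, b with b > a > 0 and every real z, one has Σ_{k=0}^∞ ((a)_k / (b)_k) · z^k / k! = e^z · Σ_{k=0}^∞ ((b-a)_k / (b)_k) · (-z)^k / k!, where (a)_k := Γ(a+k)/Γ(a) denotes the rising factorial and Γ is the real Gamma function. -/
open Real Filter Topology Finset

private def poch (x : ℝ) (k : ℕ) : ℝ := ∏ i ∈ Finset.range k, (x + i)

private lemma poch_zero (x : ℝ) : poch x 0 = 1 := by simp [poch]

private lemma poch_succ (x : ℝ) (k : ℕ) : poch x (k + 1) = poch x k * (x + k) := by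
  simp [poch, Finset.prod_range_succ]

private lemma poch_succ_left (x : ℝ) (k : ℕ) : poch x (k + 1) = x * poch (x + 1) k := by
  rw [poch, Finset.prod_range_succ']
  simp only [Nat.cast_zero, add_zero, mul_comm]
  congr 1
  refine Finset.prod_congr rfl fun i _ => ?_
  push_cast
  ring

private lemma poch_pos {x : ℝ} (hx : 0 < x) (k : ℕ) : 0 < poch x k := by
  refine Finset.prod_pos fun i _ => by positivity

private lemma poch_le {x y : ℝ} (hx : 0 < x) (hxy : x ≤ y) (k : ℕ) :
    poch x k ≤ poch y k := by
  refine Finset.prod_le_prod (fun i _ => by positivity) (fun i _ => by linarith)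

private lemma Gamma_ratio {x : ℝ} (hx : 0 < x) (k : ℕ) :
    Real.Gamma (x + k) / Real.Gamma x = poch x k := by
  have hΓ : 0 < Real.Gamma x := Real.Gamma_pos_of_pos hx
  rw [div_eq_iff (ne_of_gt hΓ)]
  induction k with
  | zero => simp [poch_zero]
  | succ k ih =>
    have hxk : x + (k : ℝ) ≠ 0 := by positivity
    have : x + ((k + 1 : ℕ) : ℝ) = (x + k) + 1 := by push_cast; ring
    rw [this, Real.Gamma_add_one hxk, ih, poch_succ]
    ring

/-- Chu–Vandermonde identity at 1 (alternating-sum form). -/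
private lemma chu (n : ℕ) : ∀ β γ : ℝ, 0 < γ →
    ∑ k ∈ Finset.range (n + 1),
      (-1 : ℝ) ^ k * (n.choose k) * (poch β k / poch γ k) =
      poch (γ - β) n / poch γ n := by
  induction n with
  | zero => intro β γ hγ; simp [poch_zero]
  | succ n ih =>
    intro β γ hγ
    have hγ' : (0 : ℝ) < γ + 1 := by linarith
    have key : ∀ j : ℕ, poch β (j + 1) / poch γ (j + 1)
        = (β / γ) * (poch (β + 1) j / poch (γ + 1) j) := by
      intro j
      rw [poch_succ_left, poch_succ_left]
      have h1 : poch (γ + 1) j ≠ 0 := ne_of_gt (poch_pos hγ' j)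
      field_simp
      try ring
    -- split the sum
    rw [Finset.sum_range_succ']
    have hsplit : ∀ j ∈ Finset.range (n + 1),
        (-1 : ℝ) ^ (j + 1) * ((n + 1).choose (j + 1)) * (poch β (j + 1) / poch γ (j + 1))
        = ((-1 : ℝ) ^ (j + 1) * (n.choose (j + 1)) * (poch β (j + 1) / poch γ (j + 1)))
          + (-(β / γ)) * ((-1 : ℝ) ^ j * (n.choose j) *
              (poch (β + 1) j / poch (γ + 1) j)) := by
      intro j _
      rw [Nat.choose_succ_succ, key j]
      push_cast
      try ring
    rw [Finset.sum_congr rfl hsplit, Finset.sum_add_distrib, ← Finset.mul_sum]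
    rw [ih (β + 1) (γ + 1) hγ']
    have hS : (∑ j ∈ Finset.range (n + 1),
        (-1 : ℝ) ^ (j + 1) * (n.choose (j + 1)) * (poch β (j + 1) / poch γ (j + 1)))
        + (-1 : ℝ) ^ 0 * ((n + 1).choose 0) * (poch β 0 / poch γ 0)
        = poch (γ - β) n / poch γ n := by
      rw [Finset.sum_range_succ]
      simp only [Nat.choose_succ_self, Nat.cast_zero, mul_zero, zero_mul, mul_one,
        add_zero, zero_add]
      have := ih β γ hγ
      rw [Finset.sum_range_succ'] at this
      simpa using this
    rw [add_right_comm]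
    rw [hS]
    -- now the rational-function identity
    have h1 : poch γ n ≠ 0 := ne_of_gt (poch_pos hγ n)
    have h2 : poch γ (n + 1) ≠ 0 := ne_of_gt (poch_pos hγ (n + 1))
    have h3 : poch (γ + 1) n ≠ 0 := ne_of_gt (poch_pos hγ' n)
    have hγ0 : γ ≠ 0 := ne_of_gt hγ
    have e1 : poch γ (n + 1) = γ * poch (γ + 1) n := poch_succ_left γ n
    have e2 : poch γ (n + 1) = γ * poch (γ + 1) n := poch_succ_left γ n
    have e3 : poch (γ - β) (n + 1) = poch (γ - β) n * (γ - β + n) := poch_succ _ n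
    have e4 : γ + 1 - (β + 1) = γ - β := by ring
    have e5 : γ * poch (γ + 1) n = poch γ n * (γ + n) := by
      rw [← e1, poch_succ]
    have hγn : (γ : ℝ) + n ≠ 0 := by positivity
    have e6 : poch (γ + 1) n = poch γ n * (γ + n) / γ := by
      rw [eq_div_iff hγ0]; linarith [e5]
    rw [e4, e3, poch_succ γ n, e6]
    field_simp
    ring

private lemma chu' (a b : ℝ) (ha : 0 < a) (hab : a < b) (n : ℕ) :
    ∑ k ∈ Finset.range (n + 1),
      (-1 : ℝ) ^ k * (n.choose k) * (poch (b - a) k / poch b k) =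
      poch a n / poch b n := by
  have := chu n (b - a) b (lt_trans ha hab)
  simpa using this

/-- Kummer's first theorem as a series identity: for `b > a > 0` and every real `z`,
`Σ_{k=0}^∞ ((a)_k/(b)_k) z^k/k! = e^z · Σ_{k=0}^∞ ((b-a)_k/(b)_k) (-z)^k/k!`,
where `(a)_k := Γ(a+k)/Γ(a)`. -/
theorem kummer_first_theorem (a b z : ℝ) (ha : 0 < a) (hab : a < b) :
    (∑' k : ℕ, ((Real.Gamma (a + k) / Real.Gamma a) /
        (Real.Gamma (b + k) / Real.Gamma b)) * z ^ k / (Nat.factorial k)) =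
      Real.exp z *
        ∑' k : ℕ, ((Real.Gamma ((b - a) + k) / Real.Gamma (b - a)) /
          (Real.Gamma (b + k) / Real.Gamma b)) * (-z) ^ k / (Nat.factorial k) := by
  have hb : (0 : ℝ) < b := lt_trans ha hab
  have hba : (0 : ℝ) < b - a := by linarith
  set f : ℕ → ℝ := fun k => (poch a k / poch b k) * z ^ k / k.factorial with hf
  set g : ℕ → ℝ := fun k => (poch (b - a) k / poch b k) * (-z) ^ k / k.factorial with hg
  set e : ℕ → ℝ := fun k => z ^ k / k.factorial with he
  -- rewrite statement sums
  have hL : (∑' k : ℕ, ((Real.Gamma (a + k) / Real.Gamma a) /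
      (Real.Gamma (b + k) / Real.Gamma b)) * z ^ k / (Nat.factorial k)) = ∑' k, f k := by
    refine tsum_congr fun k => ?_
    rw [Gamma_ratio ha, Gamma_ratio hb]
  have hR : (∑' k : ℕ, ((Real.Gamma ((b - a) + k) / Real.Gamma (b - a)) /
      (Real.Gamma (b + k) / Real.Gamma b)) * (-z) ^ k / (Nat.factorial k)) = ∑' k, g k := by
    refine tsum_congr fun k => ?_
    rw [Gamma_ratio hba, Gamma_ratio hb]
  rw [hL, hR]
  -- summability bounds
  have ratio_le : ∀ (x : ℝ), 0 < x → x ≤ b → ∀ k, |poch x k / poch b k| ≤ 1 := by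
    intro x hx hxb k
    have h1 : 0 < poch b k := poch_pos hb k
    have h2 : 0 < poch x k := poch_pos hx k
    rw [abs_of_pos (div_pos h2 h1), div_le_one h1]
    exact poch_le hx hxb k
  have hgs : Summable fun k => ‖g k‖ := by
    refine Summable.of_nonneg_of_le (fun k => norm_nonneg _) (fun k => ?_)
      (Real.summable_pow_div_factorial |z|)
    simp only [hg, Real.norm_eq_abs]
    rw [abs_div, abs_mul, abs_pow, abs_neg]
    calc |poch (b - a) k / poch b k| * |z| ^ k / |(k.factorial : ℝ)|
        ≤ 1 * |z| ^ k / |(k.factorial : ℝ)| := by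
          gcongr
          exact ratio_le _ hba (by linarith) k
      _ = |z| ^ k / (k.factorial : ℝ) := by
          rw [one_mul, Nat.abs_cast]
  have hes : Summable fun k => ‖e k‖ := by
    refine Summable.of_nonneg_of_le (fun k => norm_nonneg _) (fun k => ?_)
      (Real.summable_pow_div_factorial |z|)
    simp only [he, Real.norm_eq_abs]
    rw [abs_div, abs_pow, Nat.abs_cast]
  -- exp as tsum
  have hexp : Real.exp z = ∑' k, e k := by
    rw [Real.exp_eq_exp_ℝ, NormedSpace.exp_eq_tsum_div]
  rw [hexp, tsum_mul_tsum_eq_tsum_sum_range_of_summable_norm hes hgs]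
  refine (tsum_congr fun n => ?_).symm
  -- finite sum identity for coefficient n
  have hrefl : ∑ k ∈ Finset.range (n + 1), e k * g (n - k)
      = ∑ k ∈ Finset.range (n + 1), e (n - k) * g k := by
    rw [← Finset.sum_range_reflect]
    refine Finset.sum_congr rfl fun k hk => ?_
    have hk' : k ≤ n := Nat.lt_succ_iff.mp (Finset.mem_range.mp hk)
    congr 2; omega
  rw [hrefl]
  have hterm : ∀ k ∈ Finset.range (n + 1), e (n - k) * g k
      = (z ^ n / n.factorial) * ((-1 : ℝ) ^ k * (n.choose k) * (poch (b - a) k / poch b k)) := by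
    intro k hk
    have hk' : k ≤ n := Nat.lt_succ_iff.mp (Finset.mem_range.mp hk)
    simp only [he, hg]
    have hchoose : (n.choose k : ℝ) * k.factorial * (n - k).factorial = n.factorial := by
      exact_mod_cast congrArg Nat.cast (Nat.choose_mul_factorial_mul_factorial hk')
    have hzz : z ^ (n - k) * z ^ k = z ^ n := by
      rw [← pow_add]; congr 1; omega
    have hneg : (-z) ^ k = (-1 : ℝ) ^ k * z ^ k := by
      rw [neg_pow]
    have hf1 : (k.factorial : ℝ) ≠ 0 := Nat.cast_ne_zero.mpr k.factorial_ne_zero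
    have hf2 : ((n - k).factorial : ℝ) ≠ 0 := Nat.cast_ne_zero.mpr (n - k).factorial_ne_zero
    have hf3 : (n.factorial : ℝ) ≠ 0 := Nat.cast_ne_zero.mpr n.factorial_ne_zero
    have hc : (n.choose k : ℝ) ≠ 0 := Nat.cast_ne_zero.mpr (Nat.choose_pos hk').ne'
    have hfac : (z ^ n / n.factorial) * (n.choose k : ℝ)
        = z ^ n / (k.factorial * (n - k).factorial) := by
      rw [div_mul_eq_mul_div, div_eq_div_iff hf3 (mul_ne_zero hf1 hf2), ← hchoose]
      ring
    calc e (n - k) * g k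
        = (z ^ (n - k) * z ^ k) * ((-1 : ℝ) ^ k * (poch (b - a) k / poch b k))
            / (k.factorial * (n - k).factorial) := by
          simp only [he, hg, hneg]; ring
      _ = z ^ n * ((-1 : ℝ) ^ k * (poch (b - a) k / poch b k))
            / (k.factorial * (n - k).factorial) := by rw [hzz]
      _ = ((z ^ n / n.factorial) * (n.choose k : ℝ))
            * ((-1 : ℝ) ^ k * (poch (b - a) k / poch b k)) := by rw [hfac]; ring
      _ = (z ^ n / n.factorial) *
            ((-1 : ℝ) ^ k * (n.choose k) * (poch (b - a) k / poch b k)) := by ring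
  rw [Finset.sum_congr rfl hterm, ← Finset.mul_sum, chu' a b ha hab n]
  simp only [hf]
  ring
end

section
/- Second-order asymptotic of the ratio of Gamma functions with a common large parameter: for fixed real numbers a and b, as n → ∞ (n ranging over the natural numbers), Γ(a+n)/Γ(b+n) - n^{a-b}·(1 + (a-b)(a+b-1)/(2n)) = O(n^{a-b-2}); that is, there exist a constant M > 0 and N₀ such that for all n ≥ N₀, |Γ(a+n)/Γ(b+n) - n^{a-b}(1 + (a-b)(a+b-1)/(2n))| ≤ M·n^{a-b-2}. -/
/-!
Write `Γ(a+n)/Γ(b+n) = n^(a-b) · exp dₙ`. Euler's limit formula gives `dₙ → 0`, and the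
Taylor expansion of `log (1 + x)` to second order shows that `wₙ = dₙ - c/n`, with
`c = (a-b)(a+b-1)/2`, has increments `w_{n+1} - wₙ = O(n⁻³)`. Since `wₙ → 0`, summing the
increments from `n` to `∞` gives `wₙ = O(n⁻²)`; hence `exp dₙ = 1 + c/n + O(n⁻²)`.
-/

open Real Filter Topology Asymptotics

section Telescoping

variable {E : Type*} [SeminormedAddCommGroup E] {u : ℕ → E}

theorem norm_le_of_tendsto_zero_of_norm_sub_le {g : ℕ → ℝ} {N : ℕ}
    (hu : Tendsto u atTop (𝓝 0)) (hg : Tendsto g atTop (𝓝 0))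
    (hstep : ∀ k ≥ N, ‖u (k + 1) - u k‖ ≤ g k - g (k + 1)) {n : ℕ} (hn : N ≤ n) :
    ‖u n‖ ≤ g n := by
  have hpartial : ∀ m ≥ n, ‖u n - u m‖ ≤ g n - g m := by
    intro m hm
    induction m, hm using Nat.le_induction with
    | base => simp
    | succ m hm ih =>
      calc ‖u n - u (m + 1)‖ ≤ ‖u n - u m‖ + ‖u (m + 1) - u m‖ := by
            simpa [sub_add_sub_cancel] using norm_sub_le (u n - u m) (u (m + 1) - u m)
        _ ≤ g n - g (m + 1) := by linarith [hstep m (hn.trans hm)]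
  have hlim : Tendsto (fun m => ‖u n - u m‖) atTop (𝓝 ‖u n - 0‖) :=
    (tendsto_const_nhds.sub hu).norm
  have hglim : Tendsto (fun m => g n - g m) atTop (𝓝 (g n - 0)) := tendsto_const_nhds.sub hg
  simpa using le_of_tendsto_of_tendsto hlim hglim (eventually_atTop.2 ⟨n, hpartial⟩)

theorem inv_pow_three_le_inv_sq_sub_inv_sq {x : ℝ} (hx : 2 ≤ x) :
    x⁻¹ ^ 3 ≤ x⁻¹ ^ 2 - (x + 1)⁻¹ ^ 2 := by
  have hx0 : 0 < x := by linarith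
  rw [inv_pow, inv_pow, inv_pow, inv_sub_inv (by positivity) (by positivity), ← one_div,
    div_le_div_iff₀ (by positivity) (by positivity)]
  have : 0 ≤ x ^ 2 * (x ^ 2 - x - 1) := mul_nonneg (by positivity) (by nlinarith)
  nlinarith

theorem isBigO_inv_sq_of_tendsto_zero_of_sub_isBigO (hu : Tendsto u atTop (𝓝 0))
    (hstep : (fun n => u (n + 1) - u n) =O[atTop] fun n => (n : ℝ)⁻¹ ^ 3) :
    u =O[atTop] fun n => (n : ℝ)⁻¹ ^ 2 := by
  obtain ⟨C, hC, hCbound⟩ := hstep.exists_pos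
  obtain ⟨N, hN⟩ := eventually_atTop.1 (hCbound.bound.and (eventually_ge_atTop 2))
  refine IsBigO.of_bound C (eventually_atTop.2 ⟨N, fun n hn => ?_⟩)
  have hg : Tendsto (fun k : ℕ => C * (k : ℝ)⁻¹ ^ 2) atTop (𝓝 0) := by
    simpa using (tendsto_inv_atTop_nhds_zero_nat.pow 2).const_mul C
  refine (norm_le_of_tendsto_zero_of_norm_sub_le hu hg (fun k hk => ?_) hn).trans_eq (by simp)
  obtain ⟨hk, hk2⟩ := hN k hk
  have hk2' : (2 : ℝ) ≤ k := by exact_mod_cast hk2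
  calc ‖u (k + 1) - u k‖ ≤ C * (k : ℝ)⁻¹ ^ 3 := by simpa using hk
    _ ≤ C * (k : ℝ)⁻¹ ^ 2 - C * ((k + 1 : ℕ) : ℝ)⁻¹ ^ 2 := by
      rw [← mul_sub]
      push_cast
      exact mul_le_mul_of_nonneg_left (inv_pow_three_le_inv_sq_sub_inv_sq hk2') hC.le

end Telescoping

theorem eventually_add_natCast_pos (a : ℝ) : ∀ᶠ n : ℕ in atTop, 0 < a + n :=
  (tendsto_atTop_add_const_left _ a tendsto_natCast_atTop_atTop).eventually_gt_atTop 0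

theorem tendsto_log_Gamma_add_sub_of_pos {x : ℝ} (hx : 0 < x) :
    Tendsto (fun n : ℕ => log (Gamma (x + n)) - log (Gamma n) - x * log n) atTop (𝓝 0) := by
  rw [← tendsto_add_atTop_iff_nat 1]
  have hfeq : ∀ {y : ℝ}, 0 < y → (log ∘ Gamma) (y + 1) = (log ∘ Gamma) y + log y :=
    fun hy => by
      simp only [Function.comp_apply]
      rw [Gamma_add_one hy.ne', log_mul hy.ne' (Gamma_pos_of_pos hy).ne', add_comm]
  have hlim : Tendsto (fun n : ℕ => log (Gamma x) - BohrMollerup.logGammaSeq x n -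
      x * (log (n + 1) - log n)) atTop (𝓝 0) := by
    simpa using ((tendsto_const_nhds (x := log (Gamma x))).sub
      (BohrMollerup.tendsto_log_gamma hx)).sub (tendsto_log_nat_add_one_sub_log.const_mul x)
  refine hlim.congr fun n => ?_
  have hsum := BohrMollerup.f_add_nat_eq hfeq hx (n + 1)
  simp only [Function.comp_apply, Nat.cast_add_one] at hsum
  simp only [Nat.cast_add_one]
  rw [hsum, Gamma_nat_eq_factorial, BohrMollerup.logGammaSeq]
  ring

theorem tendsto_log_Gamma_add_sub (x : ℝ) :
    Tendsto (fun n : ℕ => log (Gamma (x + n)) - log (Gamma n) - x * log n) atTop (𝓝 0) := by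
  have hshift : ∀ y : ℝ,
      Tendsto (fun n : ℕ => log (Gamma (y + 1 + n)) - log (Gamma n) - (y + 1) * log n) atTop
        (𝓝 0) →
      Tendsto (fun n : ℕ => log (Gamma (y + n)) - log (Gamma n) - y * log n) atTop (𝓝 0) := by
    intro y hy
    have := hy.sub ((tendsto_log_comp_add_sub_log y).comp tendsto_natCast_atTop_atTop)
    rw [sub_zero] at this
    refine this.congr' ?_
    filter_upwards [eventually_add_natCast_pos y] with n hyn
    simp only [Function.comp_apply]
    rw [add_right_comm, Gamma_add_one hyn.ne', log_mul hyn.ne' (Gamma_pos_of_pos hyn).ne',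
      add_comm (n : ℝ) y]
    ring
  obtain ⟨k, hk⟩ := exists_nat_gt (-x)
  induction k generalizing x with
  | zero => exact tendsto_log_Gamma_add_sub_of_pos (by simpa using hk)
  | succ k ih => exact hshift x (ih (x + 1) (by push_cast at hk; linarith))

theorem log_one_add_sub_self_add_sq_div_two_isBigO :
    (fun x : ℝ => log (1 + x) - x + x ^ 2 / 2) =O[𝓝 0] (· ^ 3) := by
  refine IsBigO.of_bound 2 ?_
  filter_upwards [Metric.ball_mem_nhds (0 : ℝ) (by norm_num : (0 : ℝ) < 1 / 2)] with x hx
  rw [Metric.mem_ball, dist_zero_right, norm_eq_abs] at hx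
  have htaylor := abs_log_sub_add_sum_range_le (x := -x) (by rw [abs_neg]; linarith) 2
  simp only [Finset.sum_range_succ, Finset.sum_range_zero, abs_neg, sub_neg_eq_add] at htaylor
  rw [norm_eq_abs, norm_pow, norm_eq_abs]
  calc |log (1 + x) - x + x ^ 2 / 2| ≤ |x| ^ 3 / (1 - |x|) := by
        convert htaylor using 2; push_cast; ring
    _ ≤ 2 * |x| ^ 3 := by
        rw [div_le_iff₀ (by linarith)]
        nlinarith [pow_nonneg (abs_nonneg x) 3]

theorem log_one_add_div_natCast_sub_isBigO (t : ℝ) :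
    (fun n : ℕ => log (1 + t / n) - t / n + (t / n) ^ 2 / 2) =O[atTop]
      fun n : ℕ => (n : ℝ)⁻¹ ^ 3 := by
  have hlim : Tendsto (fun n : ℕ => t / n) atTop (𝓝 0) :=
    tendsto_const_nhds.div_atTop tendsto_natCast_atTop_atTop
  refine (log_one_add_sub_self_add_sq_div_two_isBigO.comp_tendsto hlim).trans ?_
  simpa only [Function.comp_def, div_eq_mul_inv, mul_pow] using
    (isBigO_refl (fun n : ℕ => (n : ℝ)⁻¹ ^ 3) atTop).const_mul_left (t ^ 3)

noncomputable def logGammaRatioDefect (a b : ℝ) (n : ℕ) : ℝ :=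
  log (Gamma (a + n)) - log (Gamma (b + n)) - (a - b) * log n

theorem tendsto_logGammaRatioDefect (a b : ℝ) :
    Tendsto (logGammaRatioDefect a b) atTop (𝓝 0) := by
  simpa using ((tendsto_log_Gamma_add_sub a).sub (tendsto_log_Gamma_add_sub b)).congr
    fun n => by simp only [logGammaRatioDefect]; ring

theorem logGammaRatioDefect_succ_sub {a b : ℝ} {n : ℕ} (hn : 0 < n) (ha : 0 < a + n)
    (hb : 0 < b + n) :
    logGammaRatioDefect a b (n + 1) - logGammaRatioDefect a b n =
      log (1 + a / n) - log (1 + b / n) - (a - b) * log (1 + 1 / n) := by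
  have hn' : (n : ℝ) ≠ 0 := by positivity
  have hlog : ∀ t : ℝ, 0 < t + n → log (1 + t / n) = log (t + n) - log n := fun t ht => by
    rw [one_add_div hn', add_comm (n : ℝ), log_div ht.ne' hn']
  simp only [logGammaRatioDefect, Nat.cast_add_one, ← add_assoc]
  rw [Gamma_add_one ha.ne', Gamma_add_one hb.ne', log_mul ha.ne' (Gamma_pos_of_pos ha).ne',
    log_mul hb.ne' (Gamma_pos_of_pos hb).ne', hlog a ha, hlog b hb,
    hlog 1 (by positivity), add_comm 1 (n : ℝ)]
  ring

theorem logGammaRatioDefect_sub_div_succ_sub_isBigO (a b : ℝ) :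
    (fun n : ℕ => (logGammaRatioDefect a b (n + 1) - (a - b) * (a + b - 1) / 2 / (n + 1 : ℕ)) -
        (logGammaRatioDefect a b n - (a - b) * (a + b - 1) / 2 / n)) =O[atTop]
      fun n : ℕ => (n : ℝ)⁻¹ ^ 3 := by
  set c := (a - b) * (a + b - 1) / 2
  have hcorr : (fun n : ℕ => c * ((n : ℝ)⁻¹ ^ 2 * ((n : ℝ) + 1)⁻¹)) =O[atTop]
      fun n : ℕ => (n : ℝ)⁻¹ ^ 3 := by
    refine IsBigO.const_mul_left (IsBigO.of_bound 1 ?_) c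
    filter_upwards [eventually_gt_atTop 0] with n hn
    have hinv : ((n : ℝ) + 1)⁻¹ ≤ (n : ℝ)⁻¹ := inv_anti₀ (by positivity) (by linarith)
    rw [one_mul, pow_succ (n : ℝ)⁻¹ 2, norm_mul, norm_mul]
    gcongr
    rwa [norm_of_nonneg (by positivity), norm_of_nonneg (by positivity)]
  refine ((((log_one_add_div_natCast_sub_isBigO a).sub (log_one_add_div_natCast_sub_isBigO b)).sub
    ((log_one_add_div_natCast_sub_isBigO 1).const_mul_left (a - b))).sub hcorr).congr' ?_
    EventuallyEq.rfl
  filter_upwards [eventually_gt_atTop 0, eventually_add_natCast_pos a,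
    eventually_add_natCast_pos b] with n hn ha hb
  have hn' : (n : ℝ) ≠ 0 := by positivity
  rw [sub_sub_sub_comm, logGammaRatioDefect_succ_sub hn ha hb]
  generalize log (1 + a / n) = A, log (1 + b / n) = B, log (1 + 1 / n) = C
  simp only [c]
  push_cast
  field_simp
  ring

theorem logGammaRatioDefect_sub_div_isBigO (a b : ℝ) :
    (fun n : ℕ => logGammaRatioDefect a b n - (a - b) * (a + b - 1) / 2 / n) =O[atTop]
      fun n : ℕ => (n : ℝ)⁻¹ ^ 2 := by
  refine isBigO_inv_sq_of_tendsto_zero_of_sub_isBigO ?_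
    (logGammaRatioDefect_sub_div_succ_sub_isBigO a b)
  simpa using (tendsto_logGammaRatioDefect a b).sub
    (tendsto_const_nhds.div_atTop tendsto_natCast_atTop_atTop)

theorem exp_logGammaRatioDefect_sub_isBigO (a b : ℝ) :
    (fun n : ℕ => exp (logGammaRatioDefect a b n) - 1 - (a - b) * (a + b - 1) / 2 / n) =O[atTop]
      fun n : ℕ => (n : ℝ)⁻¹ ^ 2 := by
  have hw := logGammaRatioDefect_sub_div_isBigO a b
  have hsq : (fun n : ℕ => (n : ℝ)⁻¹ ^ 2) =O[atTop] fun n : ℕ => (n : ℝ)⁻¹ := by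
    have := (isLittleO_pow_pow (𝕜 := ℝ) one_lt_two).comp_tendsto
      tendsto_inv_atTop_nhds_zero_nat
    simpa only [Function.comp_def, pow_one] using this.isBigO
  have hd : logGammaRatioDefect a b =O[atTop] fun n : ℕ => (n : ℝ)⁻¹ :=
    ((hw.trans hsq).add ((isBigO_refl _ _).const_mul_left ((a - b) * (a + b - 1) / 2))).congr_left
      fun n => by ring
  have hexp : (fun n => exp (logGammaRatioDefect a b n) - 1 - logGammaRatioDefect a b n) =O[atTop]
      fun n => logGammaRatioDefect a b n ^ 2 :=
    ((exp_sub_sum_range_isBigO_pow 2).comp_tendsto (tendsto_logGammaRatioDefect a b)).congr_left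
      fun n => by simp [Finset.sum_range_succ, sub_sub]
  exact ((hexp.trans (hd.pow 2)).add hw).congr_left fun n => by ring

theorem Gamma_add_div_Gamma_add_eq {a b : ℝ} {n : ℕ} (hn : 0 < n) (ha : 0 < a + n)
    (hb : 0 < b + n) :
    Gamma (a + n) / Gamma (b + n) = (n : ℝ) ^ (a - b) * exp (logGammaRatioDefect a b n) := by
  have hn' : (0 : ℝ) < n := by exact_mod_cast hn
  rw [logGammaRatioDefect, exp_sub, exp_sub, exp_log (Gamma_pos_of_pos ha),
    exp_log (Gamma_pos_of_pos hb), rpow_def_of_pos hn', mul_comm (log _)]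
  field_simp

theorem Gamma_add_div_Gamma_add_sub_isBigO (a b : ℝ) :
    (fun n : ℕ => Gamma (a + n) / Gamma (b + n) -
        (n : ℝ) ^ (a - b) * (1 + (a - b) * (a + b - 1) / (2 * n))) =O[atTop]
      fun n : ℕ => (n : ℝ) ^ (a - b - 2) := by
  refine ((isBigO_refl (fun n : ℕ => (n : ℝ) ^ (a - b)) atTop).mul
    (exp_logGammaRatioDefect_sub_isBigO a b)).congr' ?_ ?_
  · filter_upwards [eventually_gt_atTop 0, eventually_add_natCast_pos a,
      eventually_add_natCast_pos b] with n hn ha hb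
    rw [Gamma_add_div_Gamma_add_eq hn ha hb]
    ring
  · filter_upwards [eventually_gt_atTop 0] with n hn
    have hn' : (0 : ℝ) < n := by exact_mod_cast hn
    rw [rpow_sub hn' (a - b) 2, rpow_two, inv_pow, div_eq_mul_inv]

/-- Second-order asymptotic of the ratio of Gamma functions with a common large
parameter: for fixed real `a`, `b`, as `n → ∞`,
`Γ(a+n)/Γ(b+n) - n^{a-b}(1 + (a-b)(a+b-1)/(2n)) = O(n^{a-b-2})`. -/
theorem gamma_ratio_asymptotic (a b : ℝ) :
    ∃ M > (0:ℝ), ∃ N₀ : ℕ, ∀ n : ℕ, N₀ ≤ n →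
      |Real.Gamma (a + n) / Real.Gamma (b + n) -
          (n : ℝ) ^ (a - b) * (1 + (a - b) * (a + b - 1) / (2 * n))| ≤
        M * (n : ℝ) ^ (a - b - 2) := by
  obtain ⟨M, hM, hbound⟩ := (Gamma_add_div_Gamma_add_sub_isBigO a b).exists_pos
  obtain ⟨N₀, hN₀⟩ := eventually_atTop.1 hbound.bound
  refine ⟨M, hM, N₀, fun n hn => ?_⟩
  simpa [norm_of_nonneg (rpow_nonneg n.cast_nonneg _)] using hN₀ n hn
end

section
/- Asymptotics of the confluent hypergeometric function for large second parameter and fixed argument: fix real numbers a > 0, b, and z ∈ ℝ. For natural numbers n with b + n > a, define ₁F₁(a;b+n;z) := (Γ(b+n)/(Γ(a)Γ(b+n-a))) ∫₀¹ e^{z u} u^{a-1}(1-u)^{b+n-a-1} du. Then as n → ∞, ₁F₁(a;b+n;z) - 1 - a·z/n = O(n^{-2}); that is, there exist M > 0 and N₀ such that for all n ≥ N₀, |₁F₁(a;b+n;z) - 1 - a z/n| ≤ M·n^{-2}. -/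
/-!
Write `B = b + n` and `k(u) = u^(a-1) (1-u)^(B-a-1)`, so that `₁F₁(a;B;z)` is the mean of
`e^{zu}` under the beta weight `k / β(a, B-a)`. Expanding `e^{zu} = 1 + zu + O(z² e^{|z|} u²)`,
the first two beta moments `a/B` and `a(a+1)/(B(B+1))` (from `Γ(s+1) = sΓ(s)`) give
`|₁F₁(a;B;z) - 1 - az/B| ≤ z² e^{|z|} a(a+1)/(B(B+1)) = O(n⁻²)`, and `az/B - az/n = -abz/(Bn)`
is also `O(n⁻²)`.
-/

open Real MeasureTheory intervalIntegral Set ProbabilityTheory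

noncomputable def hyp1F1 (a B z : ℝ) : ℝ :=
  Gamma B / (Gamma a * Gamma (B - a)) *
    ∫ u in (0:ℝ)..1, exp (z * u) * u ^ (a - 1) * (1 - u) ^ (B - a - 1)

noncomputable def betaKernel (x y u : ℝ) : ℝ := u ^ (x - 1) * (1 - u) ^ (y - 1)

section BetaKernel

variable {x y u : ℝ}

lemma betaKernel_nonneg (hu : u ∈ Icc (0:ℝ) 1) : 0 ≤ betaKernel x y u :=
  mul_nonneg (rpow_nonneg hu.1 _) (rpow_nonneg (sub_nonneg.2 hu.2) _)

lemma ofReal_betaKernel (hu : u ∈ Icc (0:ℝ) 1) :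
    (betaKernel x y u : ℂ) = (u : ℂ) ^ ((x : ℂ) - 1) * (1 - (u : ℂ)) ^ ((y : ℂ) - 1) := by
  rw [betaKernel, Complex.ofReal_mul, Complex.ofReal_cpow hu.1,
    Complex.ofReal_cpow (sub_nonneg.2 hu.2)]
  push_cast
  rfl

lemma intervalIntegrable_betaKernel (hx : 0 < x) (hy : 0 < y) :
    IntervalIntegrable (betaKernel x y) volume 0 1 := by
  refine (Complex.betaIntegral_convergent (u := x) (v := y) (by simpa) (by simpa)).norm.congr ?_
  intro u hu
  have hu' : u ∈ Icc (0:ℝ) 1 := Ioc_subset_Icc_self (by simpa using hu)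
  simp only [← ofReal_betaKernel hu', Complex.norm_real, norm_of_nonneg (betaKernel_nonneg hu')]

lemma integral_betaKernel (hx : 0 < x) (hy : 0 < y) :
    ∫ u in (0:ℝ)..1, betaKernel x y u = beta x y := by
  rw [beta_eq_betaIntegralReal x y hx hy, Complex.betaIntegral,
    integral_congr (g := fun u : ℝ => (betaKernel x y u : ℂ)) fun u hu => by
      rw [uIcc_of_le zero_le_one] at hu
      exact (ofReal_betaKernel hu).symm,
    intervalIntegral.integral_ofReal, Complex.ofReal_re]

lemma mul_betaKernel (hx : x ≠ 0) (hu : 0 ≤ u) : u * betaKernel x y u = betaKernel (x + 1) y u := by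
  rw [betaKernel, betaKernel, add_sub_cancel_right, ← mul_assoc,
    ← rpow_one_add' hu (by simpa using hx), add_sub_cancel]

lemma integral_mul_betaKernel (hx : 0 < x) (hy : 0 < y) :
    ∫ u in (0:ℝ)..1, u * betaKernel x y u = beta (x + 1) y := by
  rw [← integral_betaKernel (by linarith) hy]
  refine integral_congr fun u hu => mul_betaKernel hx.ne' ?_
  rw [uIcc_of_le zero_le_one] at hu
  exact hu.1

lemma integral_sq_mul_betaKernel (hx : 0 < x) (hy : 0 < y) :
    ∫ u in (0:ℝ)..1, u ^ 2 * betaKernel x y u = beta (x + 2) y := by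
  rw [show x + 2 = x + 1 + 1 by ring, ← integral_mul_betaKernel (by linarith) hy]
  refine integral_congr fun u hu => ?_
  rw [uIcc_of_le zero_le_one] at hu
  simp only [sq, mul_assoc, mul_betaKernel hx.ne' hu.1]

end BetaKernel

lemma ProbabilityTheory.beta_add_one_left {x y : ℝ} (hx : x ≠ 0) (hxy : x + y ≠ 0) :
    beta (x + 1) y = x / (x + y) * beta x y := by
  rw [beta, beta, Gamma_add_one hx, add_right_comm, Gamma_add_one hxy]
  field_simp

lemma abs_exp_sub_one_sub_id_le_sq_mul_exp_abs (t : ℝ) : |exp t - 1 - t| ≤ t ^ 2 * exp |t| := by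
  have h := Complex.norm_exp_sub_sum_le_norm_mul_exp t 2
  norm_num [Finset.sum_range_succ, ← sub_sub] at h
  exact_mod_cast h

lemma abs_integral_exp_mul_sub_le {g : ℝ → ℝ} (hg : IntervalIntegrable g volume 0 1)
    (hg0 : ∀ u ∈ Icc (0:ℝ) 1, 0 ≤ g u) (z : ℝ) :
    |(∫ u in (0:ℝ)..1, exp (z * u) * g u) - (∫ u in (0:ℝ)..1, g u) -
        z * ∫ u in (0:ℝ)..1, u * g u| ≤
      z ^ 2 * exp |z| * ∫ u in (0:ℝ)..1, u ^ 2 * g u := by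
  have hcont : ∀ f : ℝ → ℝ, Continuous f → IntervalIntegrable (fun u => f u * g u) volume 0 1 :=
    fun f hf => hg.continuousOn_mul hf.continuousOn
  have hrem : (∫ u in (0:ℝ)..1, exp (z * u) * g u) - (∫ u in (0:ℝ)..1, g u) -
      z * ∫ u in (0:ℝ)..1, u * g u = ∫ u in (0:ℝ)..1, (exp (z * u) - 1 - z * u) * g u := by
    rw [← intervalIntegral.integral_const_mul, ← integral_sub (hcont _ (by fun_prop)) hg,
      ← integral_sub ((hcont _ (by fun_prop)).sub hg) ((hcont _ (by fun_prop)).const_mul z)]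
    congr 1 with u
    ring
  rw [hrem, ← intervalIntegral.integral_const_mul]
  refine (abs_integral_le_integral_abs zero_le_one).trans
    (integral_mono_on zero_le_one (hcont _ (by fun_prop)).abs
      ((hcont _ (by fun_prop)).const_mul _) fun u hu => ?_)
  have hzu : |z * u| ≤ |z| := by
    rw [abs_mul, abs_of_nonneg hu.1]
    exact mul_le_of_le_one_right (abs_nonneg z) hu.2
  calc |(exp (z * u) - 1 - z * u) * g u| = |exp (z * u) - 1 - z * u| * g u := by
        rw [abs_mul, abs_of_nonneg (hg0 u hu)]
    _ ≤ (z * u) ^ 2 * exp |z * u| * g u := by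
        gcongr
        · exact hg0 u hu
        · exact abs_exp_sub_one_sub_id_le_sq_mul_exp_abs _
    _ ≤ (z * u) ^ 2 * exp |z| * g u := by
        gcongr
        exact hg0 u hu
    _ = z ^ 2 * exp |z| * (u ^ 2 * g u) := by ring

lemma hyp1F1_eq_integral_div_beta (a B z : ℝ) :
    hyp1F1 a B z = (∫ u in (0:ℝ)..1, exp (z * u) * betaKernel a (B - a) u) / beta a (B - a) := by
  rw [hyp1F1, beta, add_sub_cancel, div_div_eq_mul_div, div_mul_eq_mul_div, mul_comm]
  simp only [betaKernel, mul_assoc]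

theorem abs_hyp1F1_sub_one_sub_le {a B : ℝ} (ha : 0 < a) (haB : a < B) (z : ℝ) :
    |hyp1F1 a B z - 1 - a * z / B| ≤ z ^ 2 * exp |z| * (a * (a + 1) / (B * (B + 1))) := by
  have hy : 0 < B - a := sub_pos.2 haB
  have hB : a + (B - a) = B := add_sub_cancel a B
  have hβ := beta_pos ha hy
  have hk := intervalIntegrable_betaKernel ha hy
  have hTaylor := abs_integral_exp_mul_sub_le hk (fun u hu => betaKernel_nonneg hu) z
  have hβ1 : beta (a + 1) (B - a) = a / B * beta a (B - a) := by
    rw [beta_add_one_left ha.ne' (by linarith), hB]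
  have hβ2 : beta (a + 2) (B - a) = a * (a + 1) / (B * (B + 1)) * beta a (B - a) := by
    rw [show a + 2 = a + 1 + 1 by ring, beta_add_one_left (by linarith) (by linarith),
      show a + 1 + (B - a) = B + 1 by ring, hβ1]
    field_simp
  rw [integral_betaKernel ha hy, integral_mul_betaKernel ha hy,
    integral_sq_mul_betaKernel ha hy, hβ1, hβ2] at hTaylor
  set E := ∫ u in (0:ℝ)..1, exp (z * u) * betaKernel a (B - a) u
  have hdiff : E / beta a (B - a) - 1 - a * z / B =
      (E - beta a (B - a) - z * (a / B * beta a (B - a))) / beta a (B - a) := by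
    field_simp
  rw [hyp1F1_eq_integral_div_beta, hdiff, abs_div, abs_of_pos hβ, div_le_iff₀ hβ]
  linarith

/-- Asymptotics of the confluent hypergeometric function for large second parameter
and fixed argument: for fixed `a > 0`, `b`, `z`, with
`₁F₁(a;b+n;z) := (Γ(b+n)/(Γ(a)Γ(b+n-a))) ∫₀¹ e^{z u} u^{a-1}(1-u)^{b+n-a-1} du`,
as `n → ∞`, `₁F₁(a;b+n;z) - 1 - a z/n = O(n^{-2})`. -/
theorem hyp1F1_asymptotic_large_b (a b z : ℝ) (ha : 0 < a) :
    ∃ M > (0:ℝ), ∃ N₀ : ℕ, ∀ n : ℕ, N₀ ≤ n →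
      |(Real.Gamma (b + n) / (Real.Gamma a * Real.Gamma (b + n - a))) *
            (∫ u in (0:ℝ)..1, Real.exp (z * u) * u ^ (a - 1) * (1 - u) ^ (b + n - a - 1)) -
          1 - a * z / n| ≤
        M * (n : ℝ) ^ (-2 : ℝ) := by
  set K := z ^ 2 * exp |z| * (a * (a + 1))
  refine ⟨4 * K + 2 * |a * b * z| + 1, by positivity, ⌈2 * (|a| + |b|)⌉₊ + 1, fun n hn => ?_⟩
  have hn : 2 * (|a| + |b|) < n := Nat.lt_of_ceil_lt hn
  have hn0 : (0 : ℝ) < n := by linarith [abs_nonneg a, abs_nonneg b]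
  have hB : (n : ℝ) / 2 ≤ b + n := by linarith [neg_abs_le b, abs_nonneg a]
  have haB : a < b + n := by linarith [le_abs_self a, neg_abs_le b]
  have hBpos : 0 < b + n := ha.trans haB
  have hshift : |a * z / (b + n) - a * z / n| = |a * b * z| / ((b + n) * n) := by
    rw [show a * z / (b + n) - a * z / n = -(a * b * z) / ((b + n) * n) by
        field_simp; ring, abs_div, abs_neg, abs_of_pos (mul_pos hBpos hn0)]
  rw [Real.rpow_neg hn0.le, show ((n : ℝ) ^ (2 : ℝ)) = (n : ℝ) ^ 2 by norm_cast]
  change |hyp1F1 a (b + n) z - 1 - a * z / n| ≤ _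
  calc _ ≤ |hyp1F1 a (b + n) z - 1 - a * z / (b + n)| + |a * z / (b + n) - a * z / n| :=
        abs_sub_le _ _ _
    _ ≤ K / ((b + n) * (b + n + 1)) + |a * b * z| / ((b + n) * n) := by
        gcongr
        · exact (abs_hyp1F1_sub_one_sub_le ha haB z).trans_eq (by ring)
        · exact hshift.le
    _ ≤ K / ((n / 2) * (n / 2)) + |a * b * z| / ((n / 2) * n) := by
        gcongr
        linarith
    _ ≤ (4 * K + 2 * |a * b * z| + 1) * ((n : ℝ) ^ 2)⁻¹ := by
        rw [← sub_nonneg]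
        field_simp
        linarith
end

section
/- Sampling probability asymptotics under strong positive selection with fixed sample size (equation (7b) of the paper): fix θ₁, θ₂ > 0 and natural numbers n₁, n₂ with n = n₁ + n₂. Define q(n₁,n₂;β) := C(n,n₁) · I(n₁,n₂,β) / I(0,0,β), where C(n,n₁) is the binomial coefficient and I(m₁,m₂,β) := ∫₀¹ x^{θ₁+m₁-1}(1-x)^{θ₂+m₂-1} e^{βx} dx. Then lim_{β → +∞} β^{n₂} · q(n₁,n₂;β) = C(n,n₁) · Γ(θ₂+n₂)/Γ(θ₂). -/
/-!
After the substitution `x = 1 - t / β`, the tail `x ∈ [1/2, 1]` of `β ^ b e^{-β} I(a, b, β)` becomes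
`∫₀^{β/2} (1 - t/β)^{a-1} t^{b-1} e^{-t} dt`, which tends to `Γ(b)` by dominated convergence, since
`1 - t/β ∈ [1/2, 1]` there. The rest, `x ∈ [0, 1/2]`, is `O(β^b e^{-β/2})`. Hence
`I(a, b, β) ~ Γ(b) β^{-b} e^β`, and in the ratio `I(θ₁+n₁, θ₂+n₂, β) / I(θ₁, θ₂, β)` everything
except `β^{-n₂} Γ(θ₂+n₂) / Γ(θ₂)` cancels.
-/

open Real Filter Topology MeasureTheory Set

/-- The integrand of `I(m₁, m₂, β)`, with `a = θ₁ + m₁` and `b = θ₂ + m₂`. -/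
noncomputable def selectionKernel (a b β x : ℝ) : ℝ :=
  x ^ (a - 1) * (1 - x) ^ (b - 1) * exp (β * x)

lemma rpow_le_two_rpow_abs {x : ℝ} (p : ℝ) (hx : 1 / 2 ≤ x) (hx1 : x ≤ 1) :
    x ^ p ≤ 2 ^ |p| := by
  rcases le_or_gt 0 p with hp | hp
  · exact (rpow_le_one (by linarith) hx1 hp).trans (one_le_rpow one_le_two (abs_nonneg p))
  · calc x ^ p ≤ (2⁻¹ : ℝ) ^ p := rpow_le_rpow_of_nonpos (by norm_num) (by linarith) hp.le
      _ = 2 ^ |p| := by rw [inv_rpow zero_le_two, ← rpow_neg zero_le_two, abs_of_neg hp]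

lemma tendsto_integral_one_sub_div_rpow_mul_Gamma_integrand (a : ℝ) {b : ℝ} (hb : 0 < b) :
    Tendsto (fun β : ℝ ↦ ∫ t in (0 : ℝ)..β / 2, (1 - t / β) ^ (a - 1) * t ^ (b - 1) * exp (-t))
      atTop (𝓝 (Gamma b)) := by
  set φ : ℝ → ℝ → ℝ := fun β t ↦ (1 - t / β) ^ (a - 1) * t ^ (b - 1) * exp (-t)
  have hlim : Tendsto (fun β ↦ ∫ t in Ioi 0, (Ioc 0 (β / 2)).indicator (φ β) t) atTop
      (𝓝 (∫ t in Ioi 0, exp (-t) * t ^ (b - 1))) := by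
    refine tendsto_integral_filter_of_dominated_convergence
      (fun t ↦ 2 ^ |a - 1| * (exp (-t) * t ^ (b - 1))) ?_ ?_
      ((GammaIntegral_convergent hb).const_mul _) ?_
    · refine .of_forall fun β ↦ (Measurable.indicator ?_ measurableSet_Ioc).aestronglyMeasurable
      fun_prop
    · refine .of_forall fun β ↦ (ae_restrict_iff' measurableSet_Ioi).2 <| .of_forall fun t ht ↦ ?_
      by_cases hmem : t ∈ Ioc 0 (β / 2)
      · have hβ : 0 < β := by linarith [hmem.1, hmem.2]
        have hhalf : 1 / 2 ≤ 1 - t / β := by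
          rw [le_sub_comm, div_le_iff₀ hβ]; linarith [hmem.2]
        have hle : 1 - t / β ≤ 1 := by have := div_pos hmem.1 hβ; linarith
        have := rpow_nonneg ht.le (b - 1)
        rw [indicator_of_mem hmem, norm_of_nonneg (by positivity)]
        calc (1 - t / β) ^ (a - 1) * t ^ (b - 1) * exp (-t)
            ≤ 2 ^ |a - 1| * t ^ (b - 1) * exp (-t) := by
              gcongr; exact rpow_le_two_rpow_abs _ hhalf hle
          _ = 2 ^ |a - 1| * (exp (-t) * t ^ (b - 1)) := by ring
      · have := rpow_nonneg ht.le (b - 1)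
        rw [indicator_of_notMem hmem, norm_zero]
        positivity
    · refine (ae_restrict_iff' measurableSet_Ioi).2 <| .of_forall fun t ht ↦ ?_
      have hφ : Tendsto (fun β ↦ φ β t) atTop (𝓝 (exp (-t) * t ^ (b - 1))) := by
        have h1 : Tendsto (fun β : ℝ ↦ 1 - t / β) atTop (𝓝 1) := by
          simpa using tendsto_const_nhds.sub ((tendsto_const_nhds (x := t)).div_atTop tendsto_id)
        have := (((continuousAt_rpow_const 1 (a - 1) (.inl one_ne_zero)).tendsto.comp h1).mul_const
          (t ^ (b - 1))).mul_const (exp (-t))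
        rwa [one_rpow, one_mul, mul_comm (t ^ _)] at this
      refine hφ.congr' ?_
      filter_upwards [eventually_ge_atTop (2 * t)] with β hβ
      rw [indicator_of_mem (show t ∈ Ioc 0 (β / 2) from ⟨ht, by linarith⟩)]
  rw [← Gamma_eq_integral hb] at hlim
  refine hlim.congr' ?_
  filter_upwards [eventually_gt_atTop 0] with β hβ
  rw [integral_indicator measurableSet_Ioc, Measure.restrict_restrict measurableSet_Ioc,
    inter_eq_left.2 Ioc_subset_Ioi_self, intervalIntegral.integral_of_le (by positivity)]

namespace selectionKernel

variable {a b : ℝ}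

lemma nonneg (a b β : ℝ) {x : ℝ} (hx0 : 0 ≤ x) (hx1 : x ≤ 1) : 0 ≤ selectionKernel a b β x := by
  unfold selectionKernel
  have := rpow_nonneg hx0 (a - 1)
  have := rpow_nonneg (sub_nonneg.2 hx1) (b - 1)
  positivity

lemma one_sub (a b β x : ℝ) :
    selectionKernel a b β (1 - x) = exp β * selectionKernel b a (-β) x := by
  simp only [selectionKernel, sub_sub_cancel]
  rw [show β * (1 - x) = β + -β * x by ring, exp_add]
  ring

lemma intervalIntegrable_zero_half (ha : 0 < a) (b β : ℝ) :
    IntervalIntegrable (selectionKernel a b β) volume 0 (1 / 2) := by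
  have hdom : IntervalIntegrable (fun x ↦ x ^ (a - 1) * (2 ^ |b - 1| * exp |β|)) volume 0 (1 / 2) :=
    (intervalIntegral.intervalIntegrable_rpow' (by linarith)).mul_const _
  have hmeas : Measurable (selectionKernel a b β) := by unfold selectionKernel; fun_prop
  refine hdom.mono_fun' hmeas.aestronglyMeasurable ?_
  rw [EventuallyLE, ae_restrict_iff' measurableSet_uIoc]
  refine ae_of_all _ fun x hx ↦ ?_
  rw [uIoc_of_le (by norm_num)] at hx
  obtain ⟨hx0, hx1⟩ := hx
  rw [norm_of_nonneg (nonneg a b β hx0.le (by linarith))]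
  have hexp : exp (β * x) ≤ exp |β| := exp_le_exp.2 <| by
    nlinarith [le_abs_self β, neg_abs_le β]
  unfold selectionKernel
  rw [mul_assoc]
  have := rpow_nonneg hx0.le (a - 1)
  gcongr
  exact rpow_le_two_rpow_abs _ (by linarith) (by linarith)

lemma intervalIntegrable_half_one (a : ℝ) (hb : 0 < b) (β : ℝ) :
    IntervalIntegrable (selectionKernel a b β) volume (1 / 2) 1 := by
  have := ((intervalIntegrable_zero_half hb a (-β)).comp_sub_left 1).const_mul (exp β)
  norm_num only [← one_sub, sub_sub_cancel, sub_zero] at this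
  exact this.symm

lemma tendsto_rpow_mul_exp_neg_mul_integral_zero_half (ha : 0 < a) (b : ℝ) :
    Tendsto (fun β : ℝ ↦ β ^ b * exp (-β) * ∫ x in (0 : ℝ)..1 / 2, selectionKernel a b β x)
      atTop (𝓝 0) := by
  set K := ∫ x in (0 : ℝ)..1 / 2, selectionKernel a b 0 x
  have hbound (β : ℝ) (hβ : 0 ≤ β) :
      ∫ x in (0 : ℝ)..1 / 2, selectionKernel a b β x ≤ K * exp (β / 2) := by
    rw [← intervalIntegral.integral_mul_const]
    refine intervalIntegral.integral_mono_on (by norm_num) (intervalIntegrable_zero_half ha b β)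
      ((intervalIntegrable_zero_half ha b 0).mul_const _) fun x hx ↦ ?_
    have := nonneg a b 0 hx.1 (by linarith [hx.2])
    simp only [selectionKernel, zero_mul, exp_zero, mul_one] at this ⊢
    gcongr
    nlinarith [hx.2]
  have hdecay := (tendsto_rpow_mul_exp_neg_mul_atTop_nhds_zero b (1 / 2) one_half_pos).const_mul K
  rw [mul_zero] at hdecay
  refine squeeze_zero' ?_ ?_ hdecay
  · filter_upwards [eventually_ge_atTop 0] with β hβ
    have := rpow_nonneg hβ b
    have : 0 ≤ ∫ x in (0 : ℝ)..1 / 2, selectionKernel a b β x :=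
      intervalIntegral.integral_nonneg (by norm_num) fun x hx ↦
        nonneg a b β hx.1 (by linarith [hx.2])
    positivity
  · filter_upwards [eventually_ge_atTop 0] with β hβ
    calc β ^ b * exp (-β) * ∫ x in (0 : ℝ)..1 / 2, selectionKernel a b β x
        ≤ β ^ b * exp (-β) * (K * exp (β / 2)) := by
          have := rpow_nonneg hβ b
          gcongr
          exact hbound β hβ
      _ = K * (β ^ b * exp (-(1 / 2) * β)) := by
          rw [show -(1 / 2) * β = -β + β / 2 by ring, exp_add]; ring

lemma rpow_mul_exp_neg_mul_integral_half_one {β : ℝ} (hβ : 0 < β) :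
    β ^ b * exp (-β) * ∫ x in (1 / 2 : ℝ)..1, selectionKernel a b β x =
      ∫ t in (0 : ℝ)..β / 2, (1 - t / β) ^ (a - 1) * t ^ (b - 1) * exp (-t) := by
  have hsubst := intervalIntegral.integral_comp_sub_div (a := 0) (b := β / 2)
    (selectionKernel a b β) hβ.ne' 1
  rw [zero_div, sub_zero, div_div_cancel_left' hβ.ne', smul_eq_mul,
    show (1 : ℝ) - 2⁻¹ = 1 / 2 by norm_num] at hsubst
  have hb : β ^ b = β ^ (b - 1) * β := by rw [rpow_sub_one hβ.ne']; field_simp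
  rw [hb, show β ^ (b - 1) * β * exp (-β) * ∫ x in (1 / 2 : ℝ)..1, selectionKernel a b β x =
    β ^ (b - 1) * exp (-β) * (β * ∫ x in (1 / 2 : ℝ)..1, selectionKernel a b β x) by ring,
    ← hsubst, ← intervalIntegral.integral_const_mul]
  refine intervalIntegral.integral_congr fun t ht ↦ ?_
  rw [uIcc_of_le (by positivity)] at ht
  have hpow : β ^ (b - 1) * (t / β) ^ (b - 1) = t ^ (b - 1) := by
    rw [div_rpow ht.1 hβ.le, mul_div_cancel₀ _ (rpow_pos_of_pos hβ _).ne']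
  have hexp : exp (-β) * exp (β * (1 - t / β)) = exp (-t) := by
    rw [← exp_add]; congr 1; field_simp; ring
  simp only [selectionKernel, sub_sub_cancel]
  rw [← hpow, ← hexp]
  ring

lemma tendsto_rpow_mul_exp_neg_mul_integral (ha : 0 < a) (hb : 0 < b) :
    Tendsto (fun β : ℝ ↦ β ^ b * exp (-β) * ∫ x in (0 : ℝ)..1, selectionKernel a b β x)
      atTop (𝓝 (Gamma b)) := by
  have hsplit := (tendsto_rpow_mul_exp_neg_mul_integral_zero_half ha b).add
    (tendsto_integral_one_sub_div_rpow_mul_Gamma_integrand a hb)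
  rw [zero_add] at hsplit
  refine hsplit.congr' ?_
  filter_upwards [eventually_gt_atTop 0] with β hβ
  rw [← rpow_mul_exp_neg_mul_integral_half_one hβ, ← mul_add,
    intervalIntegral.integral_add_adjacent_intervals (intervalIntegrable_zero_half ha b β)
      (intervalIntegrable_half_one a hb β)]

end selectionKernel

/-- Sampling probability asymptotics under strong positive selection with fixed
sample size (eq. (7b)): with
`q(n₁,n₂;β) = C(n,n₁)·I(n₁,n₂,β)/I(0,0,β)` where
`I(m₁,m₂,β) = ∫₀¹ x^{θ₁+m₁-1}(1-x)^{θ₂+m₂-1}e^{βx} dx`,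
one has `lim_{β→+∞} β^{n₂} q(n₁,n₂;β) = C(n,n₁)·Γ(θ₂+n₂)/Γ(θ₂)`. -/
theorem sampling_prob_strong_pos_selection (θ₁ θ₂ : ℝ) (hθ₁ : 0 < θ₁) (hθ₂ : 0 < θ₂)
    (n₁ n₂ : ℕ) :
    Filter.Tendsto (fun β : ℝ =>
        β ^ n₂ * ((Nat.choose (n₁ + n₂) n₁ : ℝ) *
          (∫ x in (0:ℝ)..1,
            x ^ (θ₁ + n₁ - 1) * (1 - x) ^ (θ₂ + n₂ - 1) * Real.exp (β * x)) /
          (∫ x in (0:ℝ)..1, x ^ (θ₁ - 1) * (1 - x) ^ (θ₂ - 1) * Real.exp (β * x))))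
      Filter.atTop
      (𝓝 ((Nat.choose (n₁ + n₂) n₁ : ℝ) * Real.Gamma (θ₂ + n₂) / Real.Gamma θ₂)) := by
  have hnum := selectionKernel.tendsto_rpow_mul_exp_neg_mul_integral
    (a := θ₁ + n₁) (b := θ₂ + n₂) (by positivity) (by positivity)
  have hden := selectionKernel.tendsto_rpow_mul_exp_neg_mul_integral hθ₁ hθ₂
  refine ((hnum.const_mul _).div hden (Gamma_pos_of_pos hθ₂).ne').congr' ?_
  filter_upwards [eventually_gt_atTop 0] with β hβ
  simp only [selectionKernel, Pi.div_apply]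
  rw [rpow_add hβ, rpow_natCast]
  field_simp
end

section
/- Limiting ratio of successive sampling probabilities when selection is subcritical relative to sample size (equations (10a)–(10b) of the paper): fix θ₁, θ₂ > 0, a natural number n₁, and β̃ < 1. For each natural number n₂, set n = n₁ + n₂, β = β̃·n₂, and define q(m₁,n₂;β) := C(m₁+n₂,m₁) · I(m₁,n₂,β) / I(0,0,β), where C(·,·) is the binomial coefficient and I(m₁,m₂,β) := ∫₀¹ x^{θ₁+m₁-1}(1-x)^{θ₂+m₂-1} e^{βx} dx. Then lim_{n₂ → ∞} q(n₁+1,n₂;β̃n₂) / q(n₁,n₂;β̃n₂) = (θ₁+n₁) / ((1-β̃)(n₁+1)). -/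
/-!
Write `J(a, b, c) = ∫₀¹ x^(a-1) (1-x)^(b-1) e^(c x) dx`. Substituting `x = y / n` turns
`n^a J(a, b + n, c n)` into `∫₀ⁿ y^(a-1) (1 - y/n)^(b+n-1) e^(c y) dy`, whose integrand tends to
`y^(a-1) e^(-(1-c) y)` and, as `c < 1`, is dominated by `y^(a-1) e^(-(1-c) y / 2)`; hence
`n^a J(a, b + n, c n) → (1 - c)^(-a) Γ(a)` and `n J(a + 1, ⋯) / J(a, ⋯) → a / (1 - c)`.
In the ratio of sampling probabilities the normalisation cancels, `J(a + 1, ⋯) / J(a, ⋯)` appears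
with `a = θ₁ + n₁`, and the binomial coefficients contribute `(n₁ + 1 + n₂) / (n₁ + 1)`.
-/

open Real Filter Topology MeasureTheory Set

/-- The paper's `I(m₁, m₂, β)` is `betaExpIntegral (θ₁ + m₁) (θ₂ + m₂) β`. -/
noncomputable def betaExpIntegral (a b c : ℝ) : ℝ :=
  ∫ x in (0:ℝ)..1, x ^ (a - 1) * (1 - x) ^ (b - 1) * exp (c * x)

lemma intervalIntegrable_betaExp {a b : ℝ} (ha : 0 < a) (hb : 0 < b) (c : ℝ) :
    IntervalIntegrable (fun x => x ^ (a - 1) * (1 - x) ^ (b - 1) * exp (c * x)) volume 0 1 := by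
  have hbeta := (Complex.betaIntegral_convergent (u := a) (v := b) (by simpa) (by simpa)).norm
  refine (hbeta.mul_continuousOn (g := fun x => exp (c * x)) (by fun_prop)).congr_uIoo ?_
  intro x hx
  rw [uIoo_of_le zero_le_one] at hx
  have h1x : (1 - (x : ℂ)) = ((1 - x : ℝ) : ℂ) := by push_cast; ring
  simp only [norm_mul, h1x, Complex.norm_cpow_eq_rpow_re_of_pos hx.1,
    Complex.norm_cpow_eq_rpow_re_of_pos (sub_pos.2 hx.2)]
  simp

lemma betaExpIntegral_pos {a b : ℝ} (ha : 0 < a) (hb : 0 < b) (c : ℝ) :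
    0 < betaExpIntegral a b c := by
  refine intervalIntegral.intervalIntegral_pos_of_pos_on (intervalIntegrable_betaExp ha hb c)
    (fun x hx => ?_) zero_lt_one
  have : 0 < 1 - x := sub_pos.2 hx.2
  have : 0 < x := hx.1
  positivity

lemma rpow_mul_betaExpIntegral_mul {t : ℝ} (ht : 0 < t) (a b c : ℝ) :
    t ^ a * betaExpIntegral a b (c * t) =
      ∫ y in (0:ℝ)..t, y ^ (a - 1) * (1 - y / t) ^ (b - 1) * exp (c * y) := by
  have hsub := intervalIntegral.integral_comp_div
    (fun x => x ^ (a - 1) * (1 - x) ^ (b - 1) * exp (c * t * x)) ht.ne' (a := 0) (b := t)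
  rw [zero_div, div_self ht.ne'] at hsub
  have hta : t ^ a = t ^ (a - 1) * t := by rw [rpow_sub_one ht.ne', div_mul_cancel₀ _ ht.ne']
  rw [betaExpIntegral, hta, mul_assoc, ← smul_eq_mul t, ← hsub,
    ← intervalIntegral.integral_const_mul]
  refine intervalIntegral.integral_congr fun y hy => ?_
  rw [uIcc_of_le ht.le] at hy
  have hexp : c * t * (y / t) = c * y := by field_simp
  rw [div_rpow hy.1 ht.le, hexp, ← mul_assoc, ← mul_assoc,
    mul_div_cancel₀ _ (rpow_pos_of_pos ht _).ne']

lemma one_sub_rpow_le_exp_neg_mul {u p : ℝ} (hu : u ≤ 1) (hp : 0 ≤ p) :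
    (1 - u) ^ p ≤ exp (-(u * p)) := by
  calc (1 - u) ^ p ≤ exp (-u) ^ p := rpow_le_rpow (by linarith) (one_sub_le_exp_neg u) hp
    _ = exp (-(u * p)) := by rw [← exp_mul, neg_mul]

lemma one_sub_div_rpow_mul_exp_le {b c y t : ℝ} (hb : 0 ≤ b) (hy : 0 ≤ y) (hyt : y ≤ t)
    (ht : 1 ≤ t) (htc : (1 + c) / 2 ≤ 1 - 1 / t) :
    (1 - y / t) ^ (b + t - 1) * exp (c * y) ≤ exp (-((1 - c) / 2 * y)) := by
  have ht0 : 0 < t := by linarith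
  have hexponent : y * ((1 + c) / 2) ≤ y / t * (b + t - 1) := by
    calc y * ((1 + c) / 2) ≤ y * (1 - 1 / t) := mul_le_mul_of_nonneg_left htc hy
      _ = y / t * (t - 1) := by field_simp
      _ ≤ y / t * (b + t - 1) := by gcongr; linarith
  calc (1 - y / t) ^ (b + t - 1) * exp (c * y)
      ≤ exp (-(y / t * (b + t - 1))) * exp (c * y) := by
        gcongr
        exact one_sub_rpow_le_exp_neg_mul ((div_le_one ht0).2 hyt) (by linarith)
    _ ≤ exp (-((1 - c) / 2 * y)) := by
        rw [← exp_add]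
        gcongr
        linarith

lemma tendsto_one_sub_div_rpow_add_sub_one (b y : ℝ) :
    Tendsto (fun n : ℕ => (1 - y / n) ^ (b + n - 1)) atTop (𝓝 (exp (-y))) := by
  have hbase : Tendsto (fun n : ℕ => 1 - y / n) atTop (𝓝 1) := by
    simpa using (tendsto_const_div_atTop_nhds_zero_nat y).const_sub 1
  have hpow : Tendsto (fun n : ℕ => (1 - y / n) ^ n * (1 - y / n) ^ (b - 1)) atTop
      (𝓝 (exp (-y) * 1 ^ (b - 1))) := by
    refine .mul ?_ (hbase.rpow_const (Or.inl one_ne_zero))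
    simpa [neg_div, ← sub_eq_add_neg] using tendsto_one_add_div_pow_exp (-y)
  rw [one_rpow, mul_one] at hpow
  refine hpow.congr' ?_
  filter_upwards [(hbase.eventually (lt_mem_nhds zero_lt_one))] with n hn
  rw [← rpow_natCast, ← rpow_add hn]
  ring_nf

lemma tendsto_integral_rescaled_betaExp {a b c : ℝ} (ha : 0 < a) (hb : 0 ≤ b) (hc : c < 1) :
    Tendsto (fun n : ℕ => ∫ y in (0:ℝ)..n, y ^ (a - 1) * (1 - y / n) ^ (b + n - 1) * exp (c * y))
      atTop (𝓝 ((1 / (1 - c)) ^ a * Gamma a)) := by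
  set F : ℕ → ℝ → ℝ := fun n => (Ioc 0 (n : ℝ)).indicator
    fun y => y ^ (a - 1) * (1 - y / n) ^ (b + n - 1) * exp (c * y)
  have hF_integral (n : ℕ) : ∫ y in (0:ℝ)..n, y ^ (a - 1) * (1 - y / n) ^ (b + n - 1) * exp (c * y)
      = ∫ y in Ioi 0, F n y := by
    rw [intervalIntegral.integral_of_le n.cast_nonneg, setIntegral_indicator measurableSet_Ioc,
      inter_eq_self_of_subset_right Ioc_subset_Ioi_self]
  have hF_meas : ∀ᶠ n in atTop, AEStronglyMeasurable (F n) (volume.restrict (Ioi 0)) :=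
    .of_forall fun n =>
      ((by fun_prop : Measurable _).indicator measurableSet_Ioc).aestronglyMeasurable
  have hF_bound : ∀ᶠ n : ℕ in atTop, ∀ᵐ y ∂(volume.restrict (Ioi 0)),
      ‖F n y‖ ≤ y ^ (a - 1) * exp (-((1 - c) / 2 * y)) := by
    have hlim : Tendsto (fun n : ℕ => 1 - 1 / (n : ℝ)) atTop (𝓝 1) := by
      simpa using (tendsto_one_div_atTop_nhds_zero_nat (𝕜 := ℝ)).const_sub 1
    filter_upwards [hlim.eventually_const_le (by linarith : (1 + c) / 2 < 1),
      eventually_ge_atTop 1] with n hnc hn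
    refine (ae_restrict_iff' measurableSet_Ioi).2 (.of_forall fun y (hy : 0 < y) => ?_)
    by_cases hyn : y ≤ n
    · have hbase : 0 ≤ 1 - y / n := by
        rw [sub_nonneg]; exact div_le_one_of_le₀ hyn n.cast_nonneg
      simp only [F, indicator_of_mem (show y ∈ Ioc 0 (n : ℝ) from ⟨hy, hyn⟩), norm_mul,
        Real.norm_eq_abs, abs_of_nonneg (rpow_nonneg hy.le _), abs_of_nonneg (rpow_nonneg hbase _),
        abs_of_pos (exp_pos _), mul_assoc]
      exact mul_le_mul_of_nonneg_left (one_sub_div_rpow_mul_exp_le hb hy.le hyn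
        (by exact_mod_cast hn) hnc) (rpow_nonneg hy.le _)
    · simp only [F, indicator_of_notMem (fun h : y ∈ Ioc 0 (n : ℝ) => hyn h.2), norm_zero]
      positivity
  have hbound_int : IntegrableOn (fun y : ℝ => y ^ (a - 1) * exp (-((1 - c) / 2 * y))) (Ioi 0) := by
    simpa only [rpow_one, neg_mul] using
      integrableOn_rpow_mul_exp_neg_mul_rpow (p := 1) (by linarith) one_pos
        (by linarith : 0 < (1 - c) / 2)
  have hF_lim : ∀ᵐ y ∂(volume.restrict (Ioi 0)),
      Tendsto (fun n : ℕ => F n y) atTop (𝓝 (y ^ (a - 1) * exp (-((1 - c) * y)))) := by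
    refine (ae_restrict_iff' measurableSet_Ioi).2 (.of_forall fun y (hy : 0 < y) => ?_)
    have hlim := ((tendsto_one_sub_div_rpow_add_sub_one b y).const_mul (y ^ (a - 1))).mul_const
      (exp (c * y))
    rw [mul_assoc, ← exp_add, show -y + c * y = -((1 - c) * y) by ring] at hlim
    refine hlim.congr' ?_
    filter_upwards [tendsto_natCast_atTop_atTop.eventually_ge_atTop y] with n hn
    simp only [F, indicator_of_mem (show y ∈ Ioc 0 (n : ℝ) from ⟨hy, hn⟩)]
  rw [← integral_rpow_mul_exp_neg_mul_Ioi ha (by linarith : 0 < 1 - c)]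
  simpa only [hF_integral] using
    tendsto_integral_filter_of_dominated_convergence _ hF_meas hF_bound hbound_int hF_lim

lemma tendsto_rpow_mul_betaExpIntegral {a b c : ℝ} (ha : 0 < a) (hb : 0 ≤ b) (hc : c < 1) :
    Tendsto (fun n : ℕ => (n : ℝ) ^ a * betaExpIntegral a (b + n) (c * n)) atTop
      (𝓝 ((1 / (1 - c)) ^ a * Gamma a)) := by
  refine (tendsto_integral_rescaled_betaExp ha hb hc).congr' ?_
  filter_upwards [eventually_gt_atTop 0] with n hn
  exact (rpow_mul_betaExpIntegral_mul (Nat.cast_pos.2 hn) _ _ _).symm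

lemma tendsto_mul_betaExpIntegral_add_one_div {a b c : ℝ} (ha : 0 < a) (hb : 0 ≤ b) (hc : c < 1) :
    Tendsto (fun n : ℕ => n * betaExpIntegral (a + 1) (b + n) (c * n) /
      betaExpIntegral a (b + n) (c * n)) atTop (𝓝 (a / (1 - c))) := by
  have hr : 0 < 1 / (1 - c) := by rw [one_div_pos]; linarith
  have hlimit : (1 / (1 - c)) ^ (a + 1) * Gamma (a + 1) / ((1 / (1 - c)) ^ a * Gamma a) =
      a / (1 - c) := by
    rw [Gamma_add_one ha.ne', rpow_add_one hr.ne']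
    field_simp [(Gamma_pos_of_pos ha).ne', (rpow_pos_of_pos hr a).ne']
  rw [← hlimit]
  refine ((tendsto_rpow_mul_betaExpIntegral (by linarith) hb hc).div
    (tendsto_rpow_mul_betaExpIntegral ha hb hc)
    (mul_pos (rpow_pos_of_pos hr a) (Gamma_pos_of_pos ha)).ne').congr' ?_
  filter_upwards [eventually_gt_atTop 0] with n hn
  have hn' : (0 : ℝ) < n := Nat.cast_pos.2 hn
  rw [Pi.div_apply, rpow_add_one hn'.ne', mul_assoc,
    mul_div_mul_left _ _ (rpow_pos_of_pos hn' a).ne']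

lemma cast_choose_add_one_div_cast_choose (m n : ℕ) :
    ((m + 1 + n).choose (m + 1) : ℝ) / (m + n).choose m = (m + 1 + n) / (m + 1) := by
  have h : ((m + n + 1) * (m + n).choose m : ℝ) = (m + n + 1).choose (m + 1) * (m + 1) := by
    exact_mod_cast Nat.add_one_mul_choose_eq (m + n) m
  rw [Nat.add_right_comm m 1 n,
    div_eq_div_iff (Nat.cast_pos.2 (Nat.choose_pos (Nat.le_add_right m n))).ne' (by positivity)]
  linarith

/-- Limiting ratio of successive sampling probabilities when selection is
subcritical relative to sample size (eqs. (10a)–(10b)): with `β = β̃·n₂`, `β̃ < 1`,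
and `q(m₁,n₂;β) = C(m₁+n₂,m₁)·I(m₁,n₂,β)/I(0,0,β)` where
`I(m₁,m₂,β) = ∫₀¹ x^{θ₁+m₁-1}(1-x)^{θ₂+m₂-1}e^{βx} dx`,
one has `lim_{n₂→∞} q(n₁+1,n₂;β̃n₂)/q(n₁,n₂;β̃n₂) = (θ₁+n₁)/((1-β̃)(n₁+1))`. -/
theorem sampling_prob_ratio_subcritical (θ₁ θ₂ βt : ℝ)
    (hθ₁ : 0 < θ₁) (hθ₂ : 0 < θ₂) (hβ : βt < 1) (n₁ : ℕ) :
    Filter.Tendsto (fun n₂ : ℕ =>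
        ((Nat.choose ((n₁ + 1) + n₂) (n₁ + 1) : ℝ) *
          (∫ x in (0:ℝ)..1,
            x ^ (θ₁ + (n₁ + 1 : ℕ) - 1) * (1 - x) ^ (θ₂ + n₂ - 1) * Real.exp (βt * n₂ * x)) /
          (∫ x in (0:ℝ)..1, x ^ (θ₁ - 1) * (1 - x) ^ (θ₂ - 1) * Real.exp (βt * n₂ * x))) /
        ((Nat.choose (n₁ + n₂) n₁ : ℝ) *
          (∫ x in (0:ℝ)..1,
            x ^ (θ₁ + n₁ - 1) * (1 - x) ^ (θ₂ + n₂ - 1) * Real.exp (βt * n₂ * x)) /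
          (∫ x in (0:ℝ)..1, x ^ (θ₁ - 1) * (1 - x) ^ (θ₂ - 1) * Real.exp (βt * n₂ * x))))
      Filter.atTop
      (𝓝 ((θ₁ + n₁) / ((1 - βt) * (n₁ + 1)))) := by
  have ha : 0 < θ₁ + n₁ := by positivity
  have hcast : θ₁ + ((n₁ + 1 : ℕ) : ℝ) = θ₁ + n₁ + 1 := by push_cast; ring
  have hbinom : Tendsto (fun n : ℕ => ((n₁ + 1) / (n : ℝ) + 1) / (n₁ + 1)) atTop
      (𝓝 ((0 + 1) / (n₁ + 1))) :=
    ((tendsto_const_div_atTop_nhds_zero_nat _).add_const 1).div_const _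
  have hlim := hbinom.mul (tendsto_mul_betaExpIntegral_add_one_div ha hθ₂.le hβ)
  rw [show (0 + 1) / (n₁ + 1 : ℝ) * ((θ₁ + n₁) / (1 - βt)) = (θ₁ + n₁) / ((1 - βt) * (n₁ + 1)) by
    rw [zero_add, div_mul_div_comm, one_mul, mul_comm]] at hlim
  rw [hcast]
  refine hlim.congr' ?_
  filter_upwards [eventually_gt_atTop 0] with n hn
  have hD := (betaExpIntegral_pos hθ₁ hθ₂ (βt * n)).ne'
  unfold betaExpIntegral at hD ⊢
  rw [div_div_div_cancel_right₀ hD, mul_div_mul_comm, cast_choose_add_one_div_cast_choose,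
    mul_div_assoc, ← mul_assoc]
  congr 1
  field_simp
end

section
/- Limiting ratio of successive sampling probabilities when selection is supercritical relative to sample size (equation (10c) of the paper): fix θ₁, θ₂ > 0, a natural number n₁, and β̃ > 1. For each natural number n₂, set β = β̃·n₂, and define q(m₁,n₂;β) := C(m₁+n₂,m₁) · I(m₁,n₂,β) / I(0,0,β), where C(·,·) is the binomial coefficient and I(m₁,m₂,β) := ∫₀¹ x^{θ₁+m₁-1}(1-x)^{θ₂+m₂-1} e^{βx} dx. Then lim_{n₂ → ∞} q(n₁+1,n₂;β̃n₂) / (n₂ · q(n₁,n₂;β̃n₂)) = (β̃-1) / (β̃·(n₁+1)). -/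
open Real Filter Topology MeasureTheory Set Metric

/-!
Since `C(n₁+1+n₂, n₁+1) = (n₁+1+n₂)/(n₁+1) · C(n₁+n₂, n₁)`, the ratio equals
`(n₁+1+n₂)/((n₁+1) n₂)` times the mean of `x` under the weight
`x^(θ₁+n₁-1) (1-x)^(θ₂-1) φ(x)^n₂` on `[0,1]`, where `φ(x) = (1-x) e^(β̃x)`.
As `(1-u) e^u < 1` for `u ≠ 0`, the profile `φ` has a unique strict maximum at
`x* = (β̃-1)/β̃ ∈ (0,1)`. Laplace's principle then concentrates the weights at `x*`: near `x*`
we have `φ > r`, away from it `φ ≤ M < r`, so the far mass is `O((M/r)^n₂)` relative to the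
total. Thus the mean tends to `x*` and the ratio to `x*/(n₁+1)`.
-/

noncomputable def weightedMean {X : Type*} [MeasurableSpace X] (μ : Measure X) (K : Set X)
    (w g : X → ℝ) : ℝ :=
  (∫ x in K, g x * w x ∂μ) / ∫ x in K, w x ∂μ

theorem weightedMean_sub_const {X : Type*} [MeasurableSpace X] {μ : Measure X} {K : Set X}
    {w g : X → ℝ} (a : ℝ) (hw : IntegrableOn w K μ) (hgw : IntegrableOn (fun x => g x * w x) K μ)
    (hw0 : ∫ x in K, w x ∂μ ≠ 0) :
    weightedMean μ K w g - a = weightedMean μ K w (fun x => g x - a) := by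
  simp only [weightedMean, sub_mul, integral_sub hgw (hw.const_mul a), integral_const_mul]
  field_simp

theorem IsCompact.exists_nonneg_lt_forall_le {X : Type*} [TopologicalSpace X] {K : Set X}
    {φ : X → ℝ} (hK : IsCompact K) (hφ : ContinuousOn φ K) {c : ℝ} (hc : 0 < c)
    (hlt : ∀ x ∈ K, φ x < c) : ∃ M, 0 ≤ M ∧ M < c ∧ ∀ x ∈ K, φ x ≤ M := by
  rcases K.eq_empty_or_nonempty with rfl | hne
  · exact ⟨0, le_rfl, hc, by simp⟩
  · obtain ⟨z, hz, hmax⟩ := hK.exists_isMaxOn hne hφ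
    exact ⟨max (φ z) 0, le_max_right _ _, max_lt (hlt z hz) hc,
      fun x hx => (hmax hx).trans (le_max_left _ _)⟩

section Laplace

variable {X : Type*} [MeasurableSpace X] {μ : Measure X} {K S : Set X} {f h φ : X → ℝ}

theorem pow_mul_setIntegral_le_setIntegral_mul_pow {r : ℝ} (n : ℕ) (hK : MeasurableSet K)
    (hS : MeasurableSet S) (hh : IntegrableOn h K μ)
    (hw : IntegrableOn (fun x => h x * φ x ^ n) K μ) (hh0 : ∀ x ∈ K, 0 ≤ h x)
    (hφ0 : ∀ x ∈ K, 0 ≤ φ x) (hr : 0 ≤ r) (hrφ : ∀ x ∈ K ∩ S, r ≤ φ x) :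
    r ^ n * ∫ x in K ∩ S, h x ∂μ ≤ ∫ x in K, h x * φ x ^ n ∂μ :=
  calc r ^ n * ∫ x in K ∩ S, h x ∂μ = ∫ x in K ∩ S, h x * r ^ n ∂μ := by
        rw [← integral_const_mul]; simp only [mul_comm]
    _ ≤ ∫ x in K ∩ S, h x * φ x ^ n ∂μ :=
        setIntegral_mono_on ((hh.mono_set inter_subset_left).mul_const _)
          (hw.mono_set inter_subset_left) (hK.inter hS) fun x hx =>
          mul_le_mul_of_nonneg_left (pow_le_pow_left₀ hr (hrφ x hx) n) (hh0 x hx.1)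
    _ ≤ ∫ x in K, h x * φ x ^ n ∂μ :=
        setIntegral_mono_set hw
          ((ae_restrict_iff' hK).2 (ae_of_all _ fun x hx =>
            mul_nonneg (hh0 x hx) (pow_nonneg (hφ0 x hx) n)))
          (Eventually.of_forall inter_subset_left)

theorem abs_setIntegral_mul_mul_pow_le {δ R M : ℝ} (n : ℕ) (hK : MeasurableSet K)
    (hh : IntegrableOn h K μ) (hw : IntegrableOn (fun x => h x * φ x ^ n) K μ)
    (hfw : IntegrableOn (fun x => f x * (h x * φ x ^ n)) K μ)
    (hh0 : ∀ x ∈ K, 0 ≤ h x) (hφ0 : ∀ x ∈ K, 0 ≤ φ x) (hδ : 0 ≤ δ) (hM : 0 ≤ M)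
    (hfS : ∀ x ∈ K ∩ S, |f x| ≤ δ) (hfK : ∀ x ∈ K, |f x| ≤ R) (hφM : ∀ x ∈ K \ S, φ x ≤ M) :
    |∫ x in K, f x * (h x * φ x ^ n) ∂μ| ≤
      δ * ∫ x in K, h x * φ x ^ n ∂μ + R * M ^ n * ∫ x in K, h x ∂μ := by
  have hpoint : ∀ x ∈ K, |f x * (h x * φ x ^ n)| ≤ δ * (h x * φ x ^ n) + R * M ^ n * h x := by
    intro x hx
    have hw0 : 0 ≤ h x * φ x ^ n := mul_nonneg (hh0 x hx) (pow_nonneg (hφ0 x hx) n)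
    have hR : 0 ≤ R * M ^ n * h x :=
      mul_nonneg (mul_nonneg ((abs_nonneg _).trans (hfK x hx)) (pow_nonneg hM n)) (hh0 x hx)
    rw [abs_mul, abs_of_nonneg hw0]
    by_cases hxS : x ∈ S
    · nlinarith [hfS x ⟨hx, hxS⟩]
    · have : φ x ^ n ≤ M ^ n := pow_le_pow_left₀ (hφ0 x hx) (hφM x ⟨hx, hxS⟩) n
      have : |f x| * (h x * φ x ^ n) ≤ R * (h x * M ^ n) :=
        mul_le_mul (hfK x hx) (mul_le_mul_of_nonneg_left this (hh0 x hx)) hw0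
          ((abs_nonneg _).trans (hfK x hx))
      nlinarith [mul_nonneg hδ hw0]
  calc |∫ x in K, f x * (h x * φ x ^ n) ∂μ| ≤ ∫ x in K, |f x * (h x * φ x ^ n)| ∂μ :=
        abs_integral_le_integral_abs
    _ ≤ ∫ x in K, (δ * (h x * φ x ^ n) + R * M ^ n * h x) ∂μ :=
        setIntegral_mono_on hfw.abs ((hw.const_mul δ).add (hh.const_mul _)) hK hpoint
    _ = _ := by rw [integral_add (hw.const_mul δ) (hh.const_mul _), integral_const_mul,
          integral_const_mul]

end Laplace

section Concentration

variable {X : Type*} [MetricSpace X] [MeasurableSpace X] [OpensMeasurableSpace X]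
  {μ : Measure X} {K : Set X} {g h φ : X → ℝ} {x₀ : X}

theorem tendsto_weightedMean_mul_pow (hK : IsCompact K) (hh : IntegrableOn h K μ)
    (hh0 : ∀ x ∈ K, 0 ≤ h x) (hg : ContinuousOn g K) (hφ : ContinuousOn φ K)
    (hφ0 : ∀ x ∈ K, 0 ≤ φ x) (hx₀ : x₀ ∈ K) (hφx₀ : 0 < φ x₀)
    (hmax : ∀ x ∈ K, x ≠ x₀ → φ x < φ x₀) (hpos : ∀ ε > 0, 0 < ∫ x in K ∩ ball x₀ ε, h x ∂μ) :
    Tendsto (fun n : ℕ => weightedMean μ K (fun x => h x * φ x ^ n) g) atTop (𝓝 (g x₀)) := by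
  have hKm := hK.measurableSet
  have hw (n : ℕ) : IntegrableOn (fun x => h x * φ x ^ n) K μ := hh.mul_continuousOn (hφ.pow n) hK
  rw [Metric.tendsto_atTop]
  intro ε hε
  obtain ⟨ρ, hρ, hgρ⟩ := Metric.continuousWithinAt_iff.1 (hg x₀ hx₀) (ε / 2) (half_pos hε)
  obtain ⟨M, hM0, hMlt, hM⟩ := (hK.diff isOpen_ball).exists_nonneg_lt_forall_le
    (hφ.mono sdiff_subset) hφx₀ fun x (hx : x ∈ K \ ball x₀ ρ) =>
      hmax x hx.1 (by rintro rfl; exact hx.2 (mem_ball_self hρ))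
  obtain ⟨r, hMr, hrφ⟩ := exists_between hMlt
  have hr : 0 < r := hM0.trans_lt hMr
  obtain ⟨ρ', hρ', hφρ'⟩ := Metric.continuousWithinAt_iff.1 (hφ x₀ hx₀) (φ x₀ - r) (sub_pos.2 hrφ)
  obtain ⟨R, hR⟩ := hK.exists_bound_of_continuousOn (hg.sub continuousOn_const)
  set c := ∫ x in K ∩ ball x₀ ρ', h x ∂μ
  set H := ∫ x in K, h x ∂μ
  have hc : 0 < c := hpos ρ' hρ'
  have hD (n : ℕ) : r ^ n * c ≤ ∫ x in K, h x * φ x ^ n ∂μ :=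
    pow_mul_setIntegral_le_setIntegral_mul_pow n hKm measurableSet_ball hh (hw n) hh0 hφ0 hr.le
      fun x hx => by
        have := (abs_lt.1 (hφρ' hx.1 hx.2)).1
        linarith
  have hN (n : ℕ) : |∫ x in K, (g x - g x₀) * (h x * φ x ^ n) ∂μ| ≤
      ε / 2 * ∫ x in K, h x * φ x ^ n ∂μ + R * M ^ n * H :=
    abs_setIntegral_mul_mul_pow_le n hKm hh (hw n)
      ((hw n).continuousOn_mul (hg.sub continuousOn_const) hK) hh0 hφ0 (half_pos hε).le
      hM0 (fun x hx => (hgρ hx.1 hx.2).le) hR hM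
  have htail : Tendsto (fun n : ℕ => R * H / c * (M / r) ^ n) atTop (𝓝 0) := by
    simpa using (tendsto_pow_atTop_nhds_zero_of_lt_one (div_nonneg hM0 hr.le)
      ((div_lt_one hr).2 hMr)).const_mul (R * H / c)
  obtain ⟨N, hN'⟩ := (htail.eventually (gt_mem_nhds (half_pos hε))).exists_forall_of_atTop
  refine ⟨N, fun n hn => ?_⟩
  have hDpos : 0 < ∫ x in K, h x * φ x ^ n ∂μ := (by positivity : 0 < r ^ n * c).trans_le (hD n)
  rw [dist_eq, weightedMean_sub_const _ (hw n) ((hw n).continuousOn_mul hg hK) hDpos.ne',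
    weightedMean, abs_div, abs_of_pos hDpos, div_lt_iff₀ hDpos]
  have htail_n : R * M ^ n * H < ε / 2 * ∫ x in K, h x * φ x ^ n ∂μ :=
    calc R * M ^ n * H = R * H / c * (M / r) ^ n * (r ^ n * c) := by
          rw [div_pow]; field_simp
      _ < ε / 2 * (r ^ n * c) := by gcongr; exact hN' n hn
      _ ≤ _ := by gcongr; exact hD n
  linarith [hN n]

end Concentration

theorem integrableOn_rpow_mul_one_sub_rpow {a b : ℝ} (ha : 0 < a) (hb : 0 < b) :
    IntegrableOn (fun x : ℝ => x ^ (a - 1) * (1 - x) ^ (b - 1)) (Icc 0 1) := by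
  have hβ := (Complex.betaIntegral_convergent (u := a) (v := b) (by simpa) (by simpa)).norm
  rw [intervalIntegrable_iff_integrableOn_Ioo_of_le zero_le_one] at hβ
  rw [integrableOn_Icc_iff_integrableOn_Ioo]
  refine hβ.congr_fun (fun x hx => ?_) measurableSet_Ioo
  have h1x : 0 < 1 - x := by linarith [hx.2]
  simp only [norm_mul, ← Complex.ofReal_one, ← Complex.ofReal_sub,
    Complex.norm_cpow_eq_rpow_re_of_pos hx.1, Complex.norm_cpow_eq_rpow_re_of_pos h1x]
  simp

theorem one_sub_mul_exp_lt_one {u : ℝ} (hu : u ≠ 0) : (1 - u) * exp u < 1 := by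
  calc (1 - u) * exp u < exp (-u) * exp u := by gcongr; exact one_sub_lt_exp_neg hu
    _ = 1 := by rw [← exp_add, neg_add_cancel, exp_zero]

noncomputable def selectionProfile (β x : ℝ) : ℝ := (1 - x) * exp (β * x)

theorem selectionProfile_lt_of_ne {β x : ℝ} (hβ : 0 < β) (hx : x ≠ (β - 1) / β) :
    selectionProfile β x < selectionProfile β ((β - 1) / β) := by
  have hu : β * x - (β - 1) ≠ 0 := by
    contrapose! hx
    field_simp
    linarith
  have key : selectionProfile β x =
      (1 - (β * x - (β - 1))) * exp (β * x - (β - 1)) * (exp (β - 1) / β) := by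
    rw [selectionProfile, mul_assoc, mul_div, ← exp_add]
    field_simp
    ring_nf
  have hmax : selectionProfile β ((β - 1) / β) = exp (β - 1) / β := by
    rw [selectionProfile]
    field_simp
    ring_nf
  rw [key, hmax]
  exact mul_lt_of_lt_one_left (by positivity) (one_sub_mul_exp_lt_one hu)

theorem intervalIntegral_rpow_mul_exp_eq_setIntegral_selectionProfile_pow (c θ β : ℝ) (n : ℕ) :
    ∫ x in (0:ℝ)..1, x ^ c * (1 - x) ^ (θ + n - 1) * exp (β * n * x) =
      ∫ x in Icc 0 1, x ^ c * (1 - x) ^ (θ - 1) * selectionProfile β x ^ n := by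
  rw [intervalIntegral.integral_of_le zero_le_one, integral_Ioc_eq_integral_Ioo,
    integral_Icc_eq_integral_Ioo]
  refine setIntegral_congr_fun measurableSet_Ioo fun x hx => ?_
  have h1x : 0 < 1 - x := by linarith [hx.2]
  rw [selectionProfile, mul_pow, ← exp_nat_mul, add_sub_right_comm, rpow_add h1x, rpow_natCast]
  ring_nf

theorem integral_rpow_mul_rpow_mul_exp_pos {a b : ℝ} (ha : 0 < a) (hb : 0 < b) (γ : ℝ) :
    0 < ∫ x in (0:ℝ)..1, x ^ (a - 1) * (1 - x) ^ (b - 1) * exp (γ * x) := by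
  refine intervalIntegral.intervalIntegral_pos_of_pos_on ?_ (fun x hx => ?_) zero_lt_one
  · rw [intervalIntegrable_iff_integrableOn_Icc_of_le zero_le_one]
    exact (integrableOn_rpow_mul_one_sub_rpow ha hb).mul_continuousOn
      (by fun_prop : Continuous fun x : ℝ => exp (γ * x)).continuousOn isCompact_Icc
  · have h1x : 0 < 1 - x := by linarith [hx.2]
    have := rpow_pos_of_pos hx.1 (a - 1)
    have := rpow_pos_of_pos h1x (b - 1)
    positivity

theorem Nat.cast_choose_add_one_add {R : Type*} [Field R] [CharZero R] (m n : ℕ) :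
    ((m + 1 + n).choose (m + 1) : R) = (m + 1 + n) / (m + 1) * (m + n).choose m := by
  have h : ((m + n + 1) * (m + n).choose m : R) = (m + n + 1).choose (m + 1) * (m + 1) := by
    exact_mod_cast Nat.add_one_mul_choose_eq (m + n) m
  rw [Nat.add_right_comm, div_mul_eq_mul_div, eq_div_iff (Nat.cast_add_one_ne_zero m)]
  linear_combination -h

theorem tendsto_weightedMean_selectionProfile_pow {a b β : ℝ} (ha : 0 < a) (hb : 0 < b)
    (hβ : 1 < β) :
    Tendsto (fun n : ℕ => weightedMean volume (Icc 0 1)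
        (fun x => x ^ (a - 1) * (1 - x) ^ (b - 1) * selectionProfile β x ^ n) id)
      atTop (𝓝 ((β - 1) / β)) := by
  have hβ0 : 0 < β := by linarith
  have hx₀ : (β - 1) / β ∈ Ioo (0 : ℝ) 1 :=
    ⟨div_pos (by linarith) hβ0, (div_lt_one hβ0).2 (by linarith)⟩
  have hh := integrableOn_rpow_mul_one_sub_rpow ha hb
  have hh0 : ∀ x ∈ Icc (0 : ℝ) 1, 0 ≤ x ^ (a - 1) * (1 - x) ^ (b - 1) := fun x hx =>
    mul_nonneg (rpow_nonneg hx.1 _) (rpow_nonneg (by linarith [hx.2]) _)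
  have hφ0 : ∀ x ∈ Icc (0 : ℝ) 1, 0 ≤ selectionProfile β x := fun x hx =>
    mul_nonneg (by linarith [hx.2]) (exp_pos _).le
  refine tendsto_weightedMean_mul_pow isCompact_Icc hh hh0 continuousOn_id
    (by unfold selectionProfile; fun_prop) hφ0 (Ioo_subset_Icc_self hx₀)
    (mul_pos (by linarith [hx₀.2]) (exp_pos _)) (fun x _ hx => selectionProfile_lt_of_ne hβ0 hx)
    fun ε hε => ?_
  rw [setIntegral_pos_iff_support_of_nonneg_ae
    (ae_restrict_of_forall_mem (measurableSet_Icc.inter measurableSet_ball)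
      fun x hx => hh0 x hx.1) (hh.mono_set inter_subset_left)]
  refine ((isOpen_Ioo.inter isOpen_ball).measure_pos volume ⟨_, hx₀, mem_ball_self hε⟩).trans_le
    (measure_mono fun x hx => ⟨?_, Ioo_subset_Icc_self hx.1, hx.2⟩)
  have h1x : 0 < 1 - x := by linarith [hx.1.2]
  exact (mul_pos (rpow_pos_of_pos hx.1.1 _) (rpow_pos_of_pos h1x _)).ne'

/-- Limiting ratio of successive sampling probabilities when selection is
supercritical relative to sample size (eq. (10c)): with `β = β̃·n₂`, `β̃ > 1`,
and `q(m₁,n₂;β) = C(m₁+n₂,m₁)·I(m₁,n₂,β)/I(0,0,β)` where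
`I(m₁,m₂,β) = ∫₀¹ x^{θ₁+m₁-1}(1-x)^{θ₂+m₂-1}e^{βx} dx`,
one has `lim_{n₂→∞} q(n₁+1,n₂;β̃n₂)/(n₂·q(n₁,n₂;β̃n₂)) = (β̃-1)/(β̃(n₁+1))`. -/
theorem sampling_prob_ratio_supercritical (θ₁ θ₂ βt : ℝ)
    (hθ₁ : 0 < θ₁) (hθ₂ : 0 < θ₂) (hβ : 1 < βt) (n₁ : ℕ) :
    Filter.Tendsto (fun n₂ : ℕ =>
        ((Nat.choose ((n₁ + 1) + n₂) (n₁ + 1) : ℝ) *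
          (∫ x in (0:ℝ)..1,
            x ^ (θ₁ + (n₁ + 1 : ℕ) - 1) * (1 - x) ^ (θ₂ + n₂ - 1) * Real.exp (βt * n₂ * x)) /
          (∫ x in (0:ℝ)..1, x ^ (θ₁ - 1) * (1 - x) ^ (θ₂ - 1) * Real.exp (βt * n₂ * x))) /
        ((n₂ : ℝ) * ((Nat.choose (n₁ + n₂) n₁ : ℝ) *
          (∫ x in (0:ℝ)..1,
            x ^ (θ₁ + n₁ - 1) * (1 - x) ^ (θ₂ + n₂ - 1) * Real.exp (βt * n₂ * x)) /
          (∫ x in (0:ℝ)..1, x ^ (θ₁ - 1) * (1 - x) ^ (θ₂ - 1) * Real.exp (βt * n₂ * x)))))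
      Filter.atTop
      (𝓝 ((βt - 1) / (βt * (n₁ + 1)))) := by
  have ha : 0 < θ₁ + n₁ := by positivity
  have hfactor : Tendsto (fun n : ℕ => 1 / ((n₁ : ℝ) + 1) * ((n₁ + 1) / n + 1)) atTop
      (𝓝 (1 / (n₁ + 1))) := by
    simpa using ((tendsto_const_div_atTop_nhds_zero_nat ((n₁ : ℝ) + 1)).add_const 1).const_mul
      (1 / ((n₁ : ℝ) + 1))
  have hlim := hfactor.mul (tendsto_weightedMean_selectionProfile_pow ha hθ₂ hβ)
  rw [div_mul_div_comm, one_mul, mul_comm] at hlim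
  refine hlim.congr' (eventually_ne_atTop 0 |>.mono fun n hn => ?_)
  have hnum : ∀ x ∈ Icc (0 : ℝ) 1, x ^ (θ₁ + ((n₁ + 1 : ℕ) : ℝ) - 1) = id x * x ^ (θ₁ + n₁ - 1) :=
    fun x hx => by
      rw [id, ← rpow_one_add' hx.1 (by linarith : (0 : ℝ) < 1 + (θ₁ + n₁ - 1)).ne']
      push_cast; ring_nf
  have hI₀ := integral_rpow_mul_rpow_mul_exp_pos hθ₁ hθ₂ (βt * n)
  simp only [intervalIntegral_rpow_mul_exp_eq_setIntegral_selectionProfile_pow]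
  rw [setIntegral_congr_fun measurableSet_Icc fun x hx => by rw [hnum x hx, mul_assoc (id x)],
    Nat.cast_choose_add_one_add, weightedMean]
  have : (n : ℝ) ≠ 0 := by exact_mod_cast hn
  have : ((n₁ + n).choose n₁ : ℝ) ≠ 0 := by exact_mod_cast (Nat.choose_pos (by omega)).ne'
  -- keeps `field_simp` from normalising inside the integrand of the normalising constant
  generalize ∫ x in (0:ℝ)..1, x ^ (θ₁ - 1) * (1 - x) ^ (θ₂ - 1) * exp (βt * n * x) = I₀ at hI₀ ⊢
  field_simp
end
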